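/- arXiv:2109.06428 — 14 statements merged into one kernel-verified Lean document; each statement's English description precedes it below -/
import Mathlib

section
/- Let κ₀, θ∞ ∈ ℂ, let U ⊆ ℂ be a nonempty open connected set, and let f, g : U → ℂ be differentiable functions with f(t) ≠ 0 for all t ∈ U that solve the Okamoto Hamiltonian system for P_IV: f'(t) = 4f(t)g(t) − f(t)² − 2t·f(t) − 2κ₀ and g'(t) = −2g(t)² + 2f(t)g(t) + 2t·g(t) − θ∞ on U. Then f is twice differentiable on U and satisfies the fourth Painlevé equation f'' = (f')²/(2f) + (3/2)f³ + 4t·f² + 2(t² − α)f + β/f on U with parameters α = 1 + 2θ∞ − κ₀ and β = −2κ₀². -/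
/-! Differentiating `f' = 4fg - f² - 2tf - 2κ₀` once more and eliminating `g` through
`4fg = f' + f² + 2tf + 2κ₀` (possible since `f ≠ 0`) turns the equation for `g'` into P_IV. -/

theorem hasDerivAt_deriv_of_forall_mem {𝕜 E : Type*} [NontriviallyNormedField 𝕜]
    [NormedAddCommGroup E] [NormedSpace 𝕜 E] {f f' : 𝕜 → E} {f'' : E} {U : Set 𝕜} {t : 𝕜}
    (hU : IsOpen U) (hf : ∀ s ∈ U, HasDerivAt f (f' s) s) (ht : t ∈ U)
    (hf' : HasDerivAt f' f'' t) : HasDerivAt (deriv f) f'' t :=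
  hf'.congr_of_eventuallyEq <|
    Filter.eventuallyEq_of_mem (hU.mem_nhds ht) fun s hs => (hf s hs).deriv

namespace PainleveIV

def okamotoF (κ₀ t f g : ℂ) : ℂ := 4 * f * g - f ^ 2 - 2 * t * f - 2 * κ₀

def okamotoG (θoo t f g : ℂ) : ℂ := -2 * g ^ 2 + 2 * f * g + 2 * t * g - θoo

noncomputable def rhs (α β t w w' : ℂ) : ℂ :=
  w' ^ 2 / (2 * w) + 3 / 2 * w ^ 3 + 4 * t * w ^ 2 + 2 * (t ^ 2 - α) * w + β / w

theorem hasDerivAt_okamotoF {κ₀ t f' g' : ℂ} {f g : ℂ → ℂ}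
    (hf : HasDerivAt f f' t) (hg : HasDerivAt g g' t) :
    HasDerivAt (fun s => okamotoF κ₀ s (f s) (g s))
      (4 * f' * g t + 4 * f t * g' - 2 * f t * f' - 2 * f t - 2 * t * f') t := by
  have h := ((((hf.const_mul 4).fun_mul hg).fun_sub (hf.fun_pow 2)).fun_sub
    (((hasDerivAt_id' t).const_mul 2).fun_mul hf)).sub_const (2 * κ₀)
  exact h.congr_deriv (by push_cast; ring)

theorem okamoto_second_derivative_eq_rhs (κ₀ θoo t f g : ℂ) (hf : f ≠ 0) :
    let f' := okamotoF κ₀ t f g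
    4 * f' * g + 4 * f * okamotoG θoo t f g - 2 * f * f' - 2 * f - 2 * t * f' =
      rhs (1 + 2 * θoo - κ₀) (-2 * κ₀ ^ 2) t f f' := by
  simp only [okamotoF, okamotoG, rhs]
  field_simp
  ring

end PainleveIV

open PainleveIV in
theorem okamoto_hamiltonian_system_gives_PIV_general
    (κ₀ θoo : ℂ) (U : Set ℂ)
    (hUo : IsOpen U)
    (f g : ℂ → ℂ)
    (hf0 : ∀ t ∈ U, f t ≠ 0)
    (hf : ∀ t ∈ U, HasDerivAt f (4 * f t * g t - (f t) ^ 2 - 2 * t * f t - 2 * κ₀) t)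
    (hg : ∀ t ∈ U, HasDerivAt g (-2 * (g t) ^ 2 + 2 * f t * g t + 2 * t * g t - θoo) t)
    (α β : ℂ) (hα : α = 1 + 2 * θoo - κ₀) (hβ : β = -2 * κ₀ ^ 2) :
    ∀ t ∈ U, DifferentiableAt ℂ f t ∧ DifferentiableAt ℂ (deriv f) t ∧
      deriv (deriv f) t =
        (deriv f t) ^ 2 / (2 * f t) + 3 / 2 * (f t) ^ 3 + 4 * t * (f t) ^ 2
          + 2 * (t ^ 2 - α) * f t + β / f t := by
  intro t ht
  have hf'' : HasDerivAt (deriv f) _ t :=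
    hasDerivAt_deriv_of_forall_mem hUo hf ht
      (hasDerivAt_okamotoF (κ₀ := κ₀) (hf t ht) (hg t ht))
  refine ⟨(hf t ht).differentiableAt, hf''.differentiableAt, ?_⟩
  rw [hf''.deriv, (hf t ht).deriv, hα, hβ]
  exact okamoto_second_derivative_eq_rhs κ₀ θoo t (f t) (g t) (hf0 t ht)

/-- a solution `(f, g)` of the Okamoto Hamiltonian system for P_IV with
parameters `κ₀, θoo` (with `f` nonvanishing) yields a solution `f` of the fourth
Painlevé equation with parameters `α = 1 + 2θ∞ − κ₀`, `β = −2κ₀²`. -/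
theorem okamoto_hamiltonian_system_gives_PIV
    (κ₀ θoo : ℂ) (U : Set ℂ)
    (hUo : IsOpen U) (hUne : U.Nonempty) (hUc : IsPreconnected U)
    (f g : ℂ → ℂ)
    (hf0 : ∀ t ∈ U, f t ≠ 0)
    (hf : ∀ t ∈ U, HasDerivAt f (4 * f t * g t - (f t) ^ 2 - 2 * t * f t - 2 * κ₀) t)
    (hg : ∀ t ∈ U, HasDerivAt g (-2 * (g t) ^ 2 + 2 * f t * g t + 2 * t * g t - θoo) t)
    (α β : ℂ) (hα : α = 1 + 2 * θoo - κ₀) (hβ : β = -2 * κ₀ ^ 2) :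
    ∀ t ∈ U, DifferentiableAt ℂ f t ∧ DifferentiableAt ℂ (deriv f) t ∧
      deriv (deriv f) t =
        (deriv f t) ^ 2 / (2 * f t) + 3 / 2 * (f t) ^ 3 + 4 * t * (f t) ^ 2
          + 2 * (t ^ 2 - α) * f t + β / f t :=
  okamoto_hamiltonian_system_gives_PIV_general κ₀ θoo U hUo f g hf0 hf hg α β hα hβ
end

section
/- Let Θ₀, Θ∞ ∈ ℂ, let U ⊆ ℂ be a nonempty open connected set, and let y, z : U → ℂ be differentiable functions with y(t) ≠ 0 for all t ∈ U that solve the Jimbo–Miwa Hamiltonian system for P_IV: y'(t) = −4z(t) + y(t)² + 2t·y(t) + 4Θ₀ and z'(t) = −(2/y(t))z(t)² + (−y(t) + 4Θ₀/y(t))z(t) + (Θ₀ + Θ∞)y(t) on U. Then y is twice differentiable on U and satisfies the fourth Painlevé equation y'' = (y')²/(2y) + (3/2)y³ + 4t·y² + 2(t² − α)y + β/y on U with parameters α = 2Θ∞ − 1 and β = −8Θ₀². -/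
open Filter Topology

/-!
Differentiating the first Hamilton equation `y' = -4z + y² + 2ty + 4Θ₀` once more and
substituting the second equation for `z'` expresses `y''` through `t`, `y`, `z`; eliminating
`z = (y² + 2ty + 4Θ₀ - y') / 4` by the first equation again turns this into P_IV.
-/

theorem hasDerivAt_deriv_of_eventually_hasDerivAt {𝕜 F : Type*} [NontriviallyNormedField 𝕜]
    [NormedAddCommGroup F] [NormedSpace 𝕜 F] {f g : 𝕜 → F} {g' : F} {t : 𝕜}
    (hf : ∀ᶠ s in 𝓝 t, HasDerivAt f (g s) s) (hg : HasDerivAt g g' t) :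
    HasDerivAt (deriv f) g' t :=
  hg.congr_of_eventuallyEq (hf.mono fun _ hs => hs.deriv)

namespace JimboMiwaPIV

def yDeriv (Θ₀ t y z : ℂ) : ℂ := -4 * z + y ^ 2 + 2 * t * y + 4 * Θ₀

noncomputable def zDeriv (Θ₀ Θoo y z : ℂ) : ℂ :=
  -(2 / y) * z ^ 2 + (-y + 4 * Θ₀ / y) * z + (Θ₀ + Θoo) * y

noncomputable def painleveIVRhs (α β t w w' : ℂ) : ℂ :=
  w' ^ 2 / (2 * w) + 3 / 2 * w ^ 3 + 4 * t * w ^ 2 + 2 * (t ^ 2 - α) * w + β / w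

theorem hasDerivAt_yDeriv {Θ₀ t y' z' : ℂ} {y z : ℂ → ℂ}
    (hy : HasDerivAt y y' t) (hz : HasDerivAt z z' t) :
    HasDerivAt (fun s => yDeriv Θ₀ s (y s) (z s))
      (-4 * z' + 2 * y t * y' + 2 * y t + 2 * t * y') t := by
  have h := (((hz.const_mul (-4)).fun_add (hy.fun_pow 2)).fun_add
    (((hasDerivAt_id' t).const_mul 2).fun_mul hy)).add_const (4 * Θ₀)
  exact h.congr_deriv (by push_cast; ring)

theorem second_derivative_eq_painleveIVRhs (Θ₀ Θoo t y z : ℂ) (hy : y ≠ 0) :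
    -4 * zDeriv Θ₀ Θoo y z + 2 * y * yDeriv Θ₀ t y z + 2 * y + 2 * t * yDeriv Θ₀ t y z =
      painleveIVRhs (2 * Θoo - 1) (-8 * Θ₀ ^ 2) t y (yDeriv Θ₀ t y z) := by
  unfold zDeriv yDeriv painleveIVRhs
  field_simp
  ring

end JimboMiwaPIV

open JimboMiwaPIV in
theorem jimbo_miwa_hamiltonian_system_gives_PIV_general
    (Θ₀ Θoo : ℂ) (U : Set ℂ)
    (hUo : IsOpen U)
    (y z : ℂ → ℂ)
    (hy0 : ∀ t ∈ U, y t ≠ 0)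
    (hy : ∀ t ∈ U, HasDerivAt y (-4 * z t + (y t) ^ 2 + 2 * t * y t + 4 * Θ₀) t)
    (hz : ∀ t ∈ U, HasDerivAt z
      (-(2 / y t) * (z t) ^ 2 + (-(y t) + 4 * Θ₀ / y t) * z t + (Θ₀ + Θoo) * y t) t)
    (α β : ℂ) (hα : α = 2 * Θoo - 1) (hβ : β = -8 * Θ₀ ^ 2) :
    ∀ t ∈ U, DifferentiableAt ℂ y t ∧ DifferentiableAt ℂ (deriv y) t ∧
      deriv (deriv y) t =
        (deriv y t) ^ 2 / (2 * y t) + 3 / 2 * (y t) ^ 3 + 4 * t * (y t) ^ 2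
          + 2 * (t ^ 2 - α) * y t + β / y t := by
  subst hα hβ
  intro t ht
  have hy'' : HasDerivAt (deriv y) _ t :=
    hasDerivAt_deriv_of_eventually_hasDerivAt
      (eventually_of_mem (hUo.mem_nhds ht) hy) (hasDerivAt_yDeriv (Θ₀ := Θ₀) (hy t ht) (hz t ht))
  refine ⟨(hy t ht).differentiableAt, hy''.differentiableAt, ?_⟩
  rw [hy''.deriv, (hy t ht).deriv]
  exact second_derivative_eq_painleveIVRhs Θ₀ Θoo t (y t) (z t) (hy0 t ht)

/-- a solution `(y, z)` of the Jimbo–Miwa Hamiltonian system for P_IV with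
parameters `Θ₀, Θoo` (with `y` nonvanishing) yields a solution `y` of the fourth
Painlevé equation with parameters `α = 2Θ∞ − 1`, `β = −8Θ₀²`. -/
theorem jimbo_miwa_hamiltonian_system_gives_PIV
    (Θ₀ Θoo : ℂ) (U : Set ℂ)
    (hUo : IsOpen U) (hUne : U.Nonempty) (hUc : IsPreconnected U)
    (y z : ℂ → ℂ)
    (hy0 : ∀ t ∈ U, y t ≠ 0)
    (hy : ∀ t ∈ U, HasDerivAt y (-4 * z t + (y t) ^ 2 + 2 * t * y t + 4 * Θ₀) t)
    (hz : ∀ t ∈ U, HasDerivAt z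
      (-(2 / y t) * (z t) ^ 2 + (-(y t) + 4 * Θ₀ / y t) * z t + (Θ₀ + Θoo) * y t) t)
    (α β : ℂ) (hα : α = 2 * Θoo - 1) (hβ : β = -8 * Θ₀ ^ 2) :
    ∀ t ∈ U, DifferentiableAt ℂ y t ∧ DifferentiableAt ℂ (deriv y) t ∧
      deriv (deriv y) t =
        (deriv y t) ^ 2 / (2 * y t) + 3 / 2 * (y t) ^ 3 + 4 * t * (y t) ^ 2
          + 2 * (t ^ 2 - α) * y t + β / y t :=
  jimbo_miwa_hamiltonian_system_gives_PIV_general Θ₀ Θoo U hUo y z hy0 hy hz α β hα hβ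
end

section
/- Let Θ₀, Θ∞ ∈ ℂ, let U ⊆ ℂ be a nonempty open connected set, and let q, p : U → ℂ be differentiable functions with q(t) ≠ 0 for all t ∈ U that solve the Its–Prokhorov Hamiltonian system for P_IV with parameters Θ₀, Θ∞. Define y(t) = q(t) and z(t) = (q(t)² − 4p(t)q(t) + 2q(t)·t + 4Θ₀)/4. Then y, z are differentiable and solve the Jimbo–Miwa Hamiltonian system for P_IV with the same parameters Θ₀, Θ∞ on U. -/
open Complex

/-- The Jimbo–Miwa momentum `z` expressed through the Its–Prokhorov coordinates `(q, p)`. -/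
noncomputable def jimboMiwaMomentum (Θ₀ t q p : ℂ) : ℂ :=
  (q ^ 2 - 4 * p * q + 2 * q * t + 4 * Θ₀) / 4

lemma four_mul_mul_eq_jimboMiwa_rhs (Θ₀ t q p : ℂ) :
    4 * p * q = -4 * jimboMiwaMomentum Θ₀ t q p + q ^ 2 + 2 * t * q + 4 * Θ₀ := by
  unfold jimboMiwaMomentum
  ring

lemma hasDerivAt_jimboMiwaMomentum {q p : ℂ → ℂ} {q' p' t : ℂ} (Θ₀ : ℂ)
    (hq : HasDerivAt q q' t) (hp : HasDerivAt p p' t) :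
    HasDerivAt (fun s => jimboMiwaMomentum Θ₀ s (q s) (p s))
      ((2 * q t * q' - 4 * (p' * q t + p t * q') + 2 * (q' * t + q t)) / 4) t := by
  have h := ((((hq.fun_pow 2).fun_sub ((hp.const_mul 4).fun_mul hq)).fun_add
    ((hq.const_mul 2).fun_mul (hasDerivAt_id' t))).fun_add (hasDerivAt_const t (4 * Θ₀))).div_const 4
  exact h.congr_deriv (by push_cast; ring)

lemma itsProkhorov_deriv_jimboMiwaMomentum_eq (Θ₀ Θoo t q p : ℂ) (hq : q ≠ 0) :
    let q' := 4 * p * q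
    let p' := -2 * p ^ 2 + 3 * q ^ 2 / 8 + q * t + t ^ 2 / 2 - Θoo + 1 / 2 - 2 * Θ₀ ^ 2 / q ^ 2
    let z := jimboMiwaMomentum Θ₀ t q p
    (2 * q * q' - 4 * (p' * q + p * q') + 2 * (q' * t + q)) / 4 =
      -(2 / q) * z ^ 2 + (-q + 4 * Θ₀ / q) * z + (Θ₀ + Θoo) * q := by
  simp only [jimboMiwaMomentum]
  field_simp
  ring

theorem its_prokhorov_to_jimbo_miwa_PIV_general
    (Θ₀ Θoo : ℂ) (U : Set ℂ)
    (q p : ℂ → ℂ)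
    (hq0 : ∀ t ∈ U, q t ≠ 0)
    (hq : ∀ t ∈ U, HasDerivAt q (4 * p t * q t) t)
    (hp : ∀ t ∈ U, HasDerivAt p
      (-2 * (p t) ^ 2 + 3 * (q t) ^ 2 / 8 + q t * t + t ^ 2 / 2 - Θoo + 1 / 2
        - 2 * Θ₀ ^ 2 / (q t) ^ 2) t)
    (y z : ℂ → ℂ)
    (hy_def : ∀ t, y t = q t)
    (hz_def : ∀ t, z t = ((q t) ^ 2 - 4 * p t * q t + 2 * q t * t + 4 * Θ₀) / 4) :
    ∀ t ∈ U,
      HasDerivAt y (-4 * z t + (y t) ^ 2 + 2 * t * y t + 4 * Θ₀) t ∧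
      HasDerivAt z
        (-(2 / y t) * (z t) ^ 2 + (-(y t) + 4 * Θ₀ / y t) * z t + (Θ₀ + Θoo) * y t) t := by
  rw [show y = q from funext hy_def,
    show z = fun t => jimboMiwaMomentum Θ₀ t (q t) (p t) from funext hz_def]
  intro t ht
  refine ⟨four_mul_mul_eq_jimboMiwa_rhs Θ₀ t (q t) (p t) ▸ hq t ht, ?_⟩
  rw [← itsProkhorov_deriv_jimboMiwaMomentum_eq Θ₀ Θoo t (q t) (p t) (hq0 t ht)]
  exact hasDerivAt_jimboMiwaMomentum Θ₀ (hq t ht) (hp t ht)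

/-- the birational change of variables `y = q`,
`z = (q² − 4pq + 2qt + 4Θ₀)/4` maps solutions of the Its–Prokhorov Hamiltonian system
for P_IV to solutions of the Jimbo–Miwa Hamiltonian system for P_IV with the
same parameters. -/
theorem its_prokhorov_to_jimbo_miwa_PIV
    (Θ₀ Θoo : ℂ) (U : Set ℂ)
    (hUo : IsOpen U) (hUne : U.Nonempty) (hUc : IsPreconnected U)
    (q p : ℂ → ℂ)
    (hq0 : ∀ t ∈ U, q t ≠ 0)
    (hq : ∀ t ∈ U, HasDerivAt q (4 * p t * q t) t)
    (hp : ∀ t ∈ U, HasDerivAt p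
      (-2 * (p t) ^ 2 + 3 * (q t) ^ 2 / 8 + q t * t + t ^ 2 / 2 - Θoo + 1 / 2
        - 2 * Θ₀ ^ 2 / (q t) ^ 2) t)
    (y z : ℂ → ℂ)
    (hy_def : ∀ t, y t = q t)
    (hz_def : ∀ t, z t = ((q t) ^ 2 - 4 * p t * q t + 2 * q t * t + 4 * Θ₀) / 4) :
    ∀ t ∈ U,
      HasDerivAt y (-4 * z t + (y t) ^ 2 + 2 * t * y t + 4 * Θ₀) t ∧
      HasDerivAt z
        (-(2 / y t) * (z t) ^ 2 + (-(y t) + 4 * Θ₀ / y t) * z t + (Θ₀ + Θoo) * y t) t :=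
  its_prokhorov_to_jimbo_miwa_PIV_general Θ₀ Θoo U q p hq0 hq hp y z hy_def hz_def
end

section
/- Let κ₀, θ∞ ∈ ℂ, let U ⊆ ℂ be a nonempty open connected set, and let f, g : U → ℂ be differentiable functions with f(t) ≠ 0 for all t ∈ U that solve the Okamoto Hamiltonian system for P_IV with parameters κ₀, θ∞. Define q(t) = f(t) and p(t) = g(t) − f(t)/4 − t/2 − κ₀/(2f(t)). Then q, p are differentiable and solve the Its–Prokhorov Hamiltonian system for P_IV on U with parameters Θ₀ = κ₀/2 and Θ∞ = 1 + θ∞ − κ₀/2. -/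
open Complex

/-!
With `p = g − f/4 − t/2 − κ₀/(2f)` one has `4pf = 4fg − f² − 2tf − 2κ₀`, so the Okamoto equation
for `f` is the Its–Prokhorov equation for `q = f`. Differentiating `p` and substituting both Okamoto
equations gives a rational function of `f, g, t` which, after clearing the denominator `f²`, is
identically the Its–Prokhorov right-hand side for `p`.
-/

theorem HasDerivAt.itsProkhorov_momentum {f g : ℂ → ℂ} {f' g' t : ℂ} (κ : ℂ)
    (hf : HasDerivAt f f' t) (hg : HasDerivAt g g' t) (hf0 : f t ≠ 0) :
    HasDerivAt (fun s => g s - f s / 4 - s / 2 - κ / (2 * f s))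
      (g' - f' / 4 - 1 / 2 + κ * f' / (2 * f t ^ 2)) t := by
  have hκ := (hasDerivAt_const t κ).fun_div (hf.const_mul 2) (mul_ne_zero two_ne_zero hf0)
  refine (((hg.sub (hf.div_const 4)).sub ((hasDerivAt_id' t).div_const 2)).sub hκ).congr_deriv ?_
  field_simp
  ring

theorem okamoto_f_rhs_eq_itsProkhorov_q_rhs (κ₀ f g t : ℂ) (hf0 : f ≠ 0) :
    4 * (g - f / 4 - t / 2 - κ₀ / (2 * f)) * f = 4 * f * g - f ^ 2 - 2 * t * f - 2 * κ₀ := by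
  field_simp
  ring

theorem okamoto_momentum_deriv_eq_itsProkhorov_p_rhs (κ₀ θoo f g t : ℂ) (hf0 : f ≠ 0) :
    let f' := 4 * f * g - f ^ 2 - 2 * t * f - 2 * κ₀
    let p := g - f / 4 - t / 2 - κ₀ / (2 * f)
    (-2 * g ^ 2 + 2 * f * g + 2 * t * g - θoo) - f' / 4 - 1 / 2 + κ₀ * f' / (2 * f ^ 2) =
      -2 * p ^ 2 + 3 * f ^ 2 / 8 + f * t + t ^ 2 / 2 - (1 + θoo - κ₀ / 2) + 1 / 2
        - 2 * (κ₀ / 2) ^ 2 / f ^ 2 := by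
  intro f' p
  simp only [f', p]
  field_simp
  ring

theorem okamoto_to_its_prokhorov_PIV_general
    (κ₀ θoo : ℂ) (U : Set ℂ)
    (f g : ℂ → ℂ)
    (hf0 : ∀ t ∈ U, f t ≠ 0)
    (hf : ∀ t ∈ U, HasDerivAt f (4 * f t * g t - (f t) ^ 2 - 2 * t * f t - 2 * κ₀) t)
    (hg : ∀ t ∈ U, HasDerivAt g (-2 * (g t) ^ 2 + 2 * f t * g t + 2 * t * g t - θoo) t)
    (Θ₀ Θoo : ℂ) (hΘ₀ : Θ₀ = κ₀ / 2) (hΘoo : Θoo = 1 + θoo - κ₀ / 2)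
    (q p : ℂ → ℂ)
    (hq_def : ∀ t, q t = f t)
    (hp_def : ∀ t, p t = g t - f t / 4 - t / 2 - κ₀ / (2 * f t)) :
    ∀ t ∈ U,
      HasDerivAt q (4 * p t * q t) t ∧
      HasDerivAt p
        (-2 * (p t) ^ 2 + 3 * (q t) ^ 2 / 8 + q t * t + t ^ 2 / 2 - Θoo + 1 / 2
          - 2 * Θ₀ ^ 2 / (q t) ^ 2) t := by
  intro t ht
  obtain rfl : f = q := (funext hq_def).symm
  obtain rfl : p = fun s => g s - f s / 4 - s / 2 - κ₀ / (2 * f s) := funext hp_def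
  subst hΘ₀ hΘoo
  constructor
  · simpa only [okamoto_f_rhs_eq_itsProkhorov_q_rhs κ₀ (f t) (g t) t (hf0 t ht)] using hf t ht
  · simpa only [okamoto_momentum_deriv_eq_itsProkhorov_p_rhs κ₀ θoo (f t) (g t) t (hf0 t ht)] using
      (hf t ht).itsProkhorov_momentum κ₀ (hg t ht) (hf0 t ht)

/-- the change of variables `q = f`, `p = g − f/4 − t/2 − κ₀/(2f)` maps
solutions of the Okamoto Hamiltonian system for P_IV with parameters `κ₀, θ∞` to
solutions of the Its–Prokhorov Hamiltonian system for P_IV with parameters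
`Θ₀ = κ₀/2`, `Θ∞ = 1 + θ∞ − κ₀/2`. -/
theorem okamoto_to_its_prokhorov_PIV
    (κ₀ θoo : ℂ) (U : Set ℂ)
    (hUo : IsOpen U) (hUne : U.Nonempty) (hUc : IsPreconnected U)
    (f g : ℂ → ℂ)
    (hf0 : ∀ t ∈ U, f t ≠ 0)
    (hf : ∀ t ∈ U, HasDerivAt f (4 * f t * g t - (f t) ^ 2 - 2 * t * f t - 2 * κ₀) t)
    (hg : ∀ t ∈ U, HasDerivAt g (-2 * (g t) ^ 2 + 2 * f t * g t + 2 * t * g t - θoo) t)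
    (Θ₀ Θoo : ℂ) (hΘ₀ : Θ₀ = κ₀ / 2) (hΘoo : Θoo = 1 + θoo - κ₀ / 2)
    (q p : ℂ → ℂ)
    (hq_def : ∀ t, q t = f t)
    (hp_def : ∀ t, p t = g t - f t / 4 - t / 2 - κ₀ / (2 * f t)) :
    ∀ t ∈ U,
      HasDerivAt q (4 * p t * q t) t ∧
      HasDerivAt p
        (-2 * (p t) ^ 2 + 3 * (q t) ^ 2 / 8 + q t * t + t ^ 2 / 2 - Θoo + 1 / 2
          - 2 * Θ₀ ^ 2 / (q t) ^ 2) t :=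
  okamoto_to_its_prokhorov_PIV_general κ₀ θoo U f g hf0 hf hg Θ₀ Θoo hΘ₀ hΘoo q p hq_def hp_def
end

section
/- Let κ₀, θ∞ ∈ ℂ and set Θ₀ = κ₀/2, Θ∞ = 1 + θ∞ − κ₀/2. For all f, g, t ∈ ℂ with f ≠ 0, setting q = f and p = g − f/4 − t/2 − κ₀/(2f), the identity H_IP(q, p; t) = H_Ok(f, g; t) + f/2 + 2t(Θ₀ + Θ∞) holds, where H_IP(q,p;t) = 2p²q − q³/8 − tq²/2 + (2Θ∞ − 1 − t²)q/2 + 2Θ∞·t − 2Θ₀²/q and H_Ok(f,g;t) = 2fg² − (f² + 2tf + 2κ₀)g + θ∞·f. -/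
/-!
Substituting `p = g − f/4 − t/2 − κ₀/(2f)` into `2p²f` produces the pole term `κ₀²/(2f)`, which
cancels `2Θ₀²/q = κ₀²/(2f)` exactly; after clearing the denominator `f` both sides are the same
polynomial in `f, g, t, κ₀, θ∞`.
-/

/-- under the substitution `q = f`, `p = g − f/4 − t/2 − κ₀/(2f)` and with
`Θ₀ = κ₀/2`, `Θ∞ = 1 + θ∞ − κ₀/2`, the Its–Prokhorov Hamiltonian for P_IV equals the
Okamoto Hamiltonian plus `f/2 + 2t(Θ₀ + Θ∞)`. -/
theorem its_prokhorov_equals_okamoto_hamiltonian_PIV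
    (κ₀ θoo Θ₀ Θoo : ℂ)
    (hΘ₀ : Θ₀ = κ₀ / 2) (hΘoo : Θoo = 1 + θoo - κ₀ / 2)
    (f g t q p : ℂ) (hf : f ≠ 0)
    (hq : q = f) (hp : p = g - f / 4 - t / 2 - κ₀ / (2 * f)) :
    2 * p ^ 2 * q - q ^ 3 / 8 - t * q ^ 2 / 2 + (2 * Θoo - 1 - t ^ 2) * q / 2
        + 2 * Θoo * t - 2 * Θ₀ ^ 2 / q
      = (2 * f * g ^ 2 - (f ^ 2 + 2 * t * f + 2 * κ₀) * g + θoo * f)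
          + f / 2 + 2 * t * (Θ₀ + Θoo) := by
  subst hΘ₀ hΘoo hq hp
  field_simp
  ring
end

section
/- Let κ₀, θ∞ ∈ ℂ, let U ⊆ ℂ be a nonempty open connected set, and let f, g : U → ℂ be differentiable functions with f(t) ≠ 0 for all t ∈ U that solve the Okamoto Hamiltonian system for P_IV with parameters κ₀, θ∞. Define y(t) = f(t) and z(t) = f(t)²/2 − f(t)g(t) + f(t)·t + κ₀. Then y, z are differentiable and solve the Jimbo–Miwa Hamiltonian system for P_IV on U with parameters Θ₀ = κ₀/2 and Θ∞ = 1 + θ∞ − κ₀/2. -/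
/-!
Since `y = f`, the first Jimbo–Miwa equation is the Okamoto equation for `f` with `fg` eliminated
through `z`. For the second, the product rule gives `z' = f f' - f' g - f g' + f' t + f`;
substituting the Okamoto equations and multiplying by `f ≠ 0` (to clear the `1/y` terms) turns
the claim into a polynomial identity in `f`, `g`, `t`.
-/

def okamotoToJimboMiwaZ {𝕜 : Type*} [Field 𝕜] (κ₀ f g t : 𝕜) : 𝕜 :=
  f ^ 2 / 2 - f * g + f * t + κ₀

theorem hasDerivAt_okamotoToJimboMiwaZ {𝕜 : Type*} [NontriviallyNormedField 𝕜] [NeZero (2 : 𝕜)]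
    (κ₀ : 𝕜) {f g : 𝕜 → 𝕜} {f' g' t : 𝕜} (hf : HasDerivAt f f' t) (hg : HasDerivAt g g' t) :
    HasDerivAt (fun s => okamotoToJimboMiwaZ κ₀ (f s) (g s) s)
      (f t * f' - (f' * g t + f t * g') + (f' * t + f t)) t := by
  refine ((((hf.pow 2).div_const 2).sub (hf.mul hg)).add (hf.mul (hasDerivAt_id t))
    |>.add_const κ₀).congr_deriv ?_
  simp only [id]
  field_simp
  ring

section Algebra

variable {K : Type*} [Field K] [NeZero (2 : K)]

theorem okamoto_f_deriv_eq_jimboMiwa_y (κ₀ f g t : K) :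
    4 * f * g - f ^ 2 - 2 * t * f - 2 * κ₀ =
      -4 * okamotoToJimboMiwaZ κ₀ f g t + f ^ 2 + 2 * t * f + 4 * (κ₀ / 2) := by
  unfold okamotoToJimboMiwaZ
  field_simp
  ring

theorem okamoto_z_deriv_eq_jimboMiwa_z (κ₀ θoo f g t : K) (hf : f ≠ 0) :
    let f' := 4 * f * g - f ^ 2 - 2 * t * f - 2 * κ₀
    let g' := -2 * g ^ 2 + 2 * f * g + 2 * t * g - θoo
    let z := okamotoToJimboMiwaZ κ₀ f g t
    f * f' - (f' * g + f * g') + (f' * t + f) =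
      -(2 / f) * z ^ 2 + (-f + 4 * (κ₀ / 2) / f) * z + (κ₀ / 2 + (1 + θoo - κ₀ / 2)) * f := by
  intro f' g' z
  simp only [f', g', z, okamotoToJimboMiwaZ]
  field_simp
  ring

end Algebra

theorem okamoto_to_jimbo_miwa_PIV_general
    (κ₀ θoo : ℂ) (U : Set ℂ)
    (f g : ℂ → ℂ)
    (hf0 : ∀ t ∈ U, f t ≠ 0)
    (hf : ∀ t ∈ U, HasDerivAt f (4 * f t * g t - (f t) ^ 2 - 2 * t * f t - 2 * κ₀) t)
    (hg : ∀ t ∈ U, HasDerivAt g (-2 * (g t) ^ 2 + 2 * f t * g t + 2 * t * g t - θoo) t)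
    (Θ₀ Θoo : ℂ) (hΘ₀ : Θ₀ = κ₀ / 2) (hΘoo : Θoo = 1 + θoo - κ₀ / 2)
    (y z : ℂ → ℂ)
    (hy_def : ∀ t, y t = f t)
    (hz_def : ∀ t, z t = (f t) ^ 2 / 2 - f t * g t + f t * t + κ₀) :
    ∀ t ∈ U,
      HasDerivAt y (-4 * z t + (y t) ^ 2 + 2 * t * y t + 4 * Θ₀) t ∧
      HasDerivAt z
        (-(2 / y t) * (z t) ^ 2 + (-(y t) + 4 * Θ₀ / y t) * z t + (Θ₀ + Θoo) * y t) t := by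
  intro t ht
  subst hΘ₀ hΘoo
  obtain rfl : f = y := (funext hy_def).symm
  obtain rfl : z = fun s => okamotoToJimboMiwaZ κ₀ (f s) (g s) s := funext hz_def
  exact ⟨(hf t ht).congr_deriv (okamoto_f_deriv_eq_jimboMiwa_y κ₀ (f t) (g t) t),
    (hasDerivAt_okamotoToJimboMiwaZ κ₀ (hf t ht) (hg t ht)).congr_deriv
      (okamoto_z_deriv_eq_jimboMiwa_z κ₀ θoo (f t) (g t) t (hf0 t ht))⟩

/-- the change of variables `y = f`, `z = f²/2 − fg + ft + κ₀` maps
solutions of the Okamoto Hamiltonian system for P_IV with parameters `κ₀, θ∞` to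
solutions of the Jimbo–Miwa Hamiltonian system for P_IV with parameters
`Θ₀ = κ₀/2`, `Θ∞ = 1 + θ∞ − κ₀/2`. -/
theorem okamoto_to_jimbo_miwa_PIV
    (κ₀ θoo : ℂ) (U : Set ℂ)
    (hUo : IsOpen U) (hUne : U.Nonempty) (hUc : IsPreconnected U)
    (f g : ℂ → ℂ)
    (hf0 : ∀ t ∈ U, f t ≠ 0)
    (hf : ∀ t ∈ U, HasDerivAt f (4 * f t * g t - (f t) ^ 2 - 2 * t * f t - 2 * κ₀) t)
    (hg : ∀ t ∈ U, HasDerivAt g (-2 * (g t) ^ 2 + 2 * f t * g t + 2 * t * g t - θoo) t)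
    (Θ₀ Θoo : ℂ) (hΘ₀ : Θ₀ = κ₀ / 2) (hΘoo : Θoo = 1 + θoo - κ₀ / 2)
    (y z : ℂ → ℂ)
    (hy_def : ∀ t, y t = f t)
    (hz_def : ∀ t, z t = (f t) ^ 2 / 2 - f t * g t + f t * t + κ₀) :
    ∀ t ∈ U,
      HasDerivAt y (-4 * z t + (y t) ^ 2 + 2 * t * y t + 4 * Θ₀) t ∧
      HasDerivAt z
        (-(2 / y t) * (z t) ^ 2 + (-(y t) + 4 * Θ₀ / y t) * z t + (Θ₀ + Θoo) * y t) t :=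
  okamoto_to_jimbo_miwa_PIV_general κ₀ θoo U f g hf0 hf hg Θ₀ Θoo hΘ₀ hΘoo y z hy_def hz_def
end

section
/- Let κ₀, θ∞ ∈ ℂ and set Θ₀ = κ₀/2, Θ∞ = 1 + θ∞ − κ₀/2. For all f, g, t ∈ ℂ with f ≠ 0, setting y = f and z = f²/2 − fg + ft + κ₀, the identity H_JM(y, z; t) = H_Ok(f, g; t) + f + 2t(Θ₀ + Θ∞) holds, where H_JM(y,z;t) = 2z²/y − (y + 2t + 4Θ₀/y)z + (Θ₀ + Θ∞)(y + 2t) and H_Ok(f,g;t) = 2fg² − (f² + 2tf + 2κ₀)g + θ∞·f. -/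
open Complex

/-- under the substitution `y = f`, `z = f²/2 − fg + ft + κ₀` and with
`Θ₀ = κ₀/2`, `Θ∞ = 1 + θ∞ − κ₀/2`, the Jimbo–Miwa Hamiltonian for P_IV equals the
Okamoto Hamiltonian plus `f + 2t(Θ₀ + Θ∞)`. -/
theorem jimbo_miwa_equals_okamoto_hamiltonian_PIV
    (κ₀ θoo Θ₀ Θoo : ℂ)
    (hΘ₀ : Θ₀ = κ₀ / 2) (hΘoo : Θoo = 1 + θoo - κ₀ / 2)
    (f g t y z : ℂ) (hf : f ≠ 0)
    (hy : y = f) (hz : z = f ^ 2 / 2 - f * g + f * t + κ₀) :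
    2 * z ^ 2 / y - (y + 2 * t + 4 * Θ₀ / y) * z + (Θ₀ + Θoo) * (y + 2 * t)
      = (2 * f * g ^ 2 - (f ^ 2 + 2 * t * f + 2 * κ₀) * g + θoo * f)
          + f + 2 * t * (Θ₀ + Θoo) := by
  subst hy hz hΘ₀ hΘoo
  field_simp
  ring
end

section
/- Let κ₀, θ∞ ∈ ℂ, let i be the imaginary unit, and define α̃ = ((√3 − 3i) − 6i·θ∞ − 3(√3 − i)κ₀)/(2√3) and β̃ = ((−√3 − 3i) − 6i·θ∞ + 3(√3 + i)κ₀)/(2√3). Let c = (1+i)/3^{1/4} (so c⁴ = −4/3) and c' = 3^{1/4}(1−i)/2 = 1/c. Let U ⊆ ℂ be a nonempty open connected set and let f, g : U → ℂ solve the Okamoto Hamiltonian system for P_IV with parameters κ₀, θ∞ on U. Define for z ∈ c·U := {c·t : t ∈ U}: x(z) = ((1+i)/(4·3^{3/4}))(3(√3 − i)f(c'z) + 12i·g(c'z) + 2(√3 − 3i)c'z) and y(z) = ((1+i)/(4·3^{3/4}))(3(√3 + i)f(c'z) − 12i·g(c'z) + 2(√3 + 3i)c'z). Then x, y are differentiable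 and solve the Kecker Hamiltonian system x' = y² + zx + α̃, y' = −x² − zy − β̃ on c·U. -/
open Complex

/-- the change of variables of Theorem 2.3 maps solutions of the Okamoto
Hamiltonian system for P_IV with parameters `κ₀, θ∞` to solutions of the Kecker
Hamiltonian system with parameters `α̃, β̃`, after the time rescaling `z = c·t`
where `c = (1+i)/3^(1/4)` (so `c⁴ = −4/3`) and `c' = 3^(1/4)(1−i)/2 = 1/c`. -/
theorem okamoto_to_kecker_PIV
    (κ₀ θoo : ℂ) (U : Set ℂ)
    (hUo : IsOpen U) (hUne : U.Nonempty) (hUc : IsPreconnected U)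
    (f g : ℂ → ℂ)
    (hf : ∀ t ∈ U, HasDerivAt f (4 * f t * g t - (f t) ^ 2 - 2 * t * f t - 2 * κ₀) t)
    (hg : ∀ t ∈ U, HasDerivAt g (-2 * (g t) ^ 2 + 2 * f t * g t + 2 * t * g t - θoo) t)
    (αk βk c c' : ℂ)
    (hαk : αk = (((Real.sqrt 3 : ℂ) - 3 * I) - 6 * I * θoo
      - 3 * ((Real.sqrt 3 : ℂ) - I) * κ₀) / (2 * (Real.sqrt 3 : ℂ)))
    (hβk : βk = ((-(Real.sqrt 3 : ℂ) - 3 * I) - 6 * I * θoo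
      + 3 * ((Real.sqrt 3 : ℂ) + I) * κ₀) / (2 * (Real.sqrt 3 : ℂ)))
    (hc : c = (1 + I) / Complex.ofReal ((3 : ℝ) ^ ((1 : ℝ) / 4)))
    (hc' : c' = Complex.ofReal ((3 : ℝ) ^ ((1 : ℝ) / 4)) * (1 - I) / 2)
    (x y : ℂ → ℂ)
    (hx_def : ∀ z, x z = ((1 + I) / (4 * Complex.ofReal ((3 : ℝ) ^ ((3 : ℝ) / 4)))) *
      (3 * ((Real.sqrt 3 : ℂ) - I) * f (c' * z) + 12 * I * g (c' * z)
        + 2 * ((Real.sqrt 3 : ℂ) - 3 * I) * (c' * z)))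
    (hy_def : ∀ z, y z = ((1 + I) / (4 * Complex.ofReal ((3 : ℝ) ^ ((3 : ℝ) / 4)))) *
      (3 * ((Real.sqrt 3 : ℂ) + I) * f (c' * z) - 12 * I * g (c' * z)
        + 2 * ((Real.sqrt 3 : ℂ) + 3 * I) * (c' * z))) :
    ∀ z ∈ (fun t => c * t) '' U,
      HasDerivAt x ((y z) ^ 2 + z * x z + αk) z ∧
      HasDerivAt y (-(x z) ^ 2 - z * y z - βk) z := by
  rintro z ⟨t, ht, rfl⟩
  set p : ℂ := Complex.ofReal ((3 : ℝ) ^ ((1 : ℝ) / 4)) with hp_def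
  have hppos : (0:ℝ) < (3 : ℝ) ^ ((1 : ℝ) / 4) := Real.rpow_pos_of_pos (by norm_num) _
  have hp0 : p ≠ 0 := by
    simp only [hp_def, ne_eq, ofReal_eq_zero]; exact ne_of_gt hppos
  have hsR : Real.sqrt 3 = ((3 : ℝ) ^ ((1 : ℝ) / 4)) ^ 2 := by
    rw [Real.sqrt_eq_rpow, ← Real.rpow_natCast ((3:ℝ) ^ ((1:ℝ)/4)) 2,
      ← Real.rpow_mul (by norm_num)]
    norm_num
  have hs : (Real.sqrt 3 : ℂ) = p ^ 2 := by rw [hsR]; push_cast; ring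
  have hqR : (3 : ℝ) ^ ((3 : ℝ) / 4) = ((3 : ℝ) ^ ((1 : ℝ) / 4)) ^ 3 := by
    rw [← Real.rpow_natCast ((3:ℝ) ^ ((1:ℝ)/4)) 3, ← Real.rpow_mul (by norm_num)]
    norm_num
  have hq : (Complex.ofReal ((3 : ℝ) ^ ((3 : ℝ) / 4))) = p ^ 3 := by
    rw [hqR]; push_cast; ring
  have hp4 : p ^ 4 = 3 := by
    rw [hp_def]
    norm_cast
    rw [← Real.rpow_natCast ((3:ℝ) ^ ((1:ℝ)/4)) 4, ← Real.rpow_mul (by norm_num)]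
    norm_num
  have hcc : c * c' = 1 := by
    rw [hc, hc', hp_def]
    field_simp
    linear_combination (-1) * Complex.I_sq
  have hct : c' * (c * t) = t := by rw [← mul_assoc, mul_comm c' c, hcc, one_mul]
  have hfd := hf t ht
  have hgd := hg t ht
  have hlin : HasDerivAt (fun w : ℂ => c' * w) c' (c * t) := by
    simpa using (hasDerivAt_id (c * t)).const_mul c'
  have hfd' : HasDerivAt f (4 * f t * g t - (f t) ^ 2 - 2 * t * f t - 2 * κ₀)
      (c' * (c * t)) := by rw [hct]; exact hfd
  have hgd' : HasDerivAt g (-2 * (g t) ^ 2 + 2 * f t * g t + 2 * t * g t - θoo)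
      (c' * (c * t)) := by rw [hct]; exact hgd
  have hfc : HasDerivAt (fun w => f (c' * w))
      ((4 * f t * g t - (f t) ^ 2 - 2 * t * f t - 2 * κ₀) * c') (c * t) := by
    exact hfd'.comp (c * t) hlin
  have hgc : HasDerivAt (fun w => g (c' * w))
      ((-2 * (g t) ^ 2 + 2 * f t * g t + 2 * t * g t - θoo) * c') (c * t) := by
    exact hgd'.comp (c * t) hlin
  set K : ℂ := (1 + I) / (4 * Complex.ofReal ((3 : ℝ) ^ ((3 : ℝ) / 4))) with hK_def
  have hK2 : K = (1 + I) * p / 12 := by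
    rw [hK_def, hq, div_eq_div_iff (mul_ne_zero (by norm_num) (pow_ne_zero 3 hp0)) (by norm_num)]
    linear_combination (-4 * (1 + I)) * hp4
  have hc2 : c = (1 + I) * p ^ 3 / 3 := by
    rw [hc, div_eq_div_iff hp0 (by norm_num : (3:ℂ) ≠ 0)]
    linear_combination (-(1 + I)) * hp4
  have hαk2 : αk = (p ^ 2 - 3 * I - 6 * I * θoo - 3 * (p ^ 2 - I) * κ₀) * p ^ 2 / 6 := by
    rw [hαk, hs, div_eq_div_iff (mul_ne_zero (by norm_num) (pow_ne_zero 2 hp0)) (by norm_num : (6:ℂ) ≠ 0)]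
    linear_combination (-2 * (p ^ 2 - 3 * I - 6 * I * θoo - 3 * (p ^ 2 - I) * κ₀)) * hp4
  have hβk2 : βk = (-p ^ 2 - 3 * I - 6 * I * θoo + 3 * (p ^ 2 + I) * κ₀) * p ^ 2 / 6 := by
    rw [hβk, hs, div_eq_div_iff (mul_ne_zero (by norm_num) (pow_ne_zero 2 hp0)) (by norm_num : (6:ℂ) ≠ 0)]
    linear_combination (-2 * (-p ^ 2 - 3 * I - 6 * I * θoo + 3 * (p ^ 2 + I) * κ₀)) * hp4
  have Hx : HasDerivAt (fun w => K *
      (3 * ((Real.sqrt 3 : ℂ) - I) * f (c' * w) + 12 * I * g (c' * w)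
        + 2 * ((Real.sqrt 3 : ℂ) - 3 * I) * (c' * w)))
      (K * (3 * ((Real.sqrt 3 : ℂ) - I) * ((4 * f t * g t - (f t) ^ 2 - 2 * t * f t - 2 * κ₀) * c')
        + 12 * I * ((-2 * (g t) ^ 2 + 2 * f t * g t + 2 * t * g t - θoo) * c')
        + 2 * ((Real.sqrt 3 : ℂ) - 3 * I) * c')) (c * t) := by
    exact (((hfc.const_mul _).add (hgc.const_mul _)).add
      ((hlin.const_mul (2 * ((Real.sqrt 3 : ℂ) - 3 * I))))).const_mul K
  have Hy : HasDerivAt (fun w => K *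
      (3 * ((Real.sqrt 3 : ℂ) + I) * f (c' * w) - 12 * I * g (c' * w)
        + 2 * ((Real.sqrt 3 : ℂ) + 3 * I) * (c' * w)))
      (K * (3 * ((Real.sqrt 3 : ℂ) + I) * ((4 * f t * g t - (f t) ^ 2 - 2 * t * f t - 2 * κ₀) * c')
        - 12 * I * ((-2 * (g t) ^ 2 + 2 * f t * g t + 2 * t * g t - θoo) * c')
        + 2 * ((Real.sqrt 3 : ℂ) + 3 * I) * c')) (c * t) := by
    exact (((hfc.const_mul _).sub (hgc.const_mul _)).add
      ((hlin.const_mul (2 * ((Real.sqrt 3 : ℂ) + 3 * I))))).const_mul K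
  have hxeq : (fun w => K *
      (3 * ((Real.sqrt 3 : ℂ) - I) * f (c' * w) + 12 * I * g (c' * w)
        + 2 * ((Real.sqrt 3 : ℂ) - 3 * I) * (c' * w))) = x := (funext hx_def).symm
  have hyeq : (fun w => K *
      (3 * ((Real.sqrt 3 : ℂ) + I) * f (c' * w) - 12 * I * g (c' * w)
        + 2 * ((Real.sqrt 3 : ℂ) + 3 * I) * (c' * w))) = y := (funext hy_def).symm
  rw [hxeq] at Hx
  rw [hyeq] at Hy
  constructor
  · convert Hx using 1
    beta_reduce
    rw [hy_def, hx_def, hct, hαk2, hK2, hc2, hc', hs]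
    linear_combination ((1/6) * p^2 * I * t^2 + (1/3) * p^2 * I * (f t) * t
        + (1/8) * p^2 * I * (f t)^2) * hp4
      + ((-1/4) * p^2 * I + (-1/2) * p^2 * I * θoo + (1/4) * p^2 * I * κ₀
        + (1/2) * p^2 * I * t^2 - p^2 * I * (g t) * t + p^2 * I * (g t)^2
        + (3/4) * p^2 * I * (f t) * t + (-1/2) * p^2 * I * (f t) * (g t)
        + (1/4) * p^2 * I * (f t)^2 + (1/4) * p^2 * I^2 * t^2 - p^2 * I^2 * (g t) * t
        + p^2 * I^2 * (g t)^2 + (1/4) * p^2 * I^2 * (f t) * t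
        + (-1/2) * p^2 * I^2 * (f t) * (g t) + (1/16) * p^2 * I^2 * (f t)^2
        + (1/12) * p^4 + (-1/4) * p^4 * κ₀ + (1/4) * p^4 * (f t) * t
        + (-1/2) * p^4 * (f t) * (g t) + (1/8) * p^4 * (f t)^2
        + (1/4) * p^4 * I * (f t) * t + (-1/2) * p^4 * I * (f t) * (g t)
        + (1/8) * p^4 * I * (f t)^2 + (1/12) * p^6 * t^2 + (1/6) * p^6 * (f t) * t
        + (1/16) * p^6 * (f t)^2) * Complex.I_sq
  · convert Hy using 1
    beta_reduce
    rw [hy_def, hx_def, hct, hβk2, hK2, hc2, hc', hs]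
    linear_combination ((-1/6) * p^2 * I * t^2 + (-1/3) * p^2 * I * (f t) * t
        + (-1/8) * p^2 * I * (f t)^2) * hp4
      + ((1/4) * p^2 * I + (1/2) * p^2 * I * θoo + (-1/4) * p^2 * I * κ₀
        + (-1/2) * p^2 * I * t^2 + p^2 * I * (g t) * t - p^2 * I * (g t)^2
        + (-3/4) * p^2 * I * (f t) * t + (1/2) * p^2 * I * (f t) * (g t)
        + (-1/4) * p^2 * I * (f t)^2 + (-1/4) * p^2 * I^2 * t^2 + p^2 * I^2 * (g t) * t
        - p^2 * I^2 * (g t)^2 + (-1/4) * p^2 * I^2 * (f t) * t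
        + (1/2) * p^2 * I^2 * (f t) * (g t) + (-1/16) * p^2 * I^2 * (f t)^2
        + (1/12) * p^4 + (-1/4) * p^4 * κ₀ + (1/4) * p^4 * (f t) * t
        + (-1/2) * p^4 * (f t) * (g t) + (1/8) * p^4 * (f t)^2
        + (1/4) * p^4 * I * (f t) * t + (-1/2) * p^4 * I * (f t) * (g t)
        + (1/8) * p^4 * I * (f t)^2 + (-1/12) * p^6 * t^2 + (-1/6) * p^6 * (f t) * t
        + (-1/16) * p^6 * (f t)^2) * Complex.I_sq
end

section
/- Let α̃, β̃ ∈ ℂ, let V ⊆ ℂ be a nonempty open connected set, and let x, y : V → ℂ be differentiable functions solving the Kecker Hamiltonian system x'(z) = y(z)² + z·x(z) + α̃, y'(z) = −x(z)² − z·y(z) − β̃ on V, such that x(z) + y(z) − z ≠ 0 for all z ∈ V. Let c = (1+i)/3^{1/4} (so c⁴ = −4/3) and let U = {t ∈ ℂ : c·t ∈ V}. Define w : U → ℂ by w(t) = (2/(3c))·(x(ct) + y(ct) − ct). Then w is twice differentiable and satisfies the fourth Painlevé equation w'' = (w')²/(2w) + (3/2)w³ + 4t·w² + 2(t² − α)w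 + β/w on U with parameters α = (i/√3)(α̃ + β̃) and β = −(2/9)(1 − α̃ + β̃)². -/
/-!
For `s = x + y - z` the system gives `s' = (y - x) s - (1 - α̃ + β̃)`. Differentiating once more
and eliminating `y - x` through this relation, `s` satisfies
`2 s s'' = s'² - s⁴ - 4 z s³ - 3 z² s² - 2 (α̃ + β̃) s² - (1 - α̃ + β̃)²`, a form of P_IV.
The substitution `w(t) = (2 / (3c)) s(ct)` normalizes its coefficients exactly because `c⁴ = -4/3`.
-/

open Complex Filter Topology

theorem HasDerivAt.const_mul_comp_const_mul {𝕜 : Type*} [NontriviallyNormedField 𝕜]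
    {f : 𝕜 → 𝕜} {f' k c t : 𝕜}
    (hf : HasDerivAt f f' (c * t)) : HasDerivAt (fun u => k * f (c * u)) (k * c * f') t :=
  ((hf.comp t (by simpa using (hasDerivAt_id t).const_mul c)).const_mul k).congr_deriv (by ring)

theorem HasDerivAt.deriv_of_eventually_hasDerivAt {𝕜 F : Type*} [NontriviallyNormedField 𝕜]
    [NormedAddCommGroup F] [NormedSpace 𝕜 F] {f f' : 𝕜 → F} {f'' : F} {t : 𝕜}
    (hf : ∀ᶠ u in 𝓝 t, HasDerivAt f (f' u) u) (hf' : HasDerivAt f' f'' t) :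
    HasDerivAt (_root_.deriv f) f'' t :=
  hf'.congr_of_eventuallyEq (hf.mono fun _ hu => hu.deriv)

theorem Real.rpow_one_div_four_sq {a : ℝ} (ha : 0 ≤ a) : (a ^ (1 / 4 : ℝ)) ^ 2 = √a := by
  rw [Real.sqrt_eq_rpow, ← Real.rpow_natCast, ← Real.rpow_mul ha]
  norm_num

theorem kecker_scale_sq :
    ((1 + I) / Complex.ofReal ((3 : ℝ) ^ ((1 : ℝ) / 4))) ^ 2 = 2 * I / √3 := by
  rw [div_pow, ← ofReal_pow, Real.rpow_one_div_four_sq (by norm_num)]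
  congr 1
  linear_combination I_sq

theorem kecker_scale_pow_four :
    ((1 + I) / Complex.ofReal ((3 : ℝ) ^ ((1 : ℝ) / 4))) ^ 4 = -4 / 3 := by
  have h3 : ((√3 : ℝ) : ℂ) ^ 2 = 3 := by
    rw [← ofReal_pow, Real.sq_sqrt (by norm_num)]
    norm_num
  rw [show 4 = 2 * 2 by rfl, pow_mul, kecker_scale_sq, div_pow, h3]
  linear_combination 4 / 3 * I_sq

section Kecker

variable {αk βk : ℂ} {x y : ℂ → ℂ} {z : ℂ}

theorem hasDerivAt_kecker_sum (hx : HasDerivAt x (y z ^ 2 + z * x z + αk) z)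
    (hy : HasDerivAt y (-(x z) ^ 2 - z * y z - βk) z) :
    HasDerivAt (fun z => x z + y z - z) ((y z - x z) * (x z + y z - z) - (1 - αk + βk)) z :=
  ((hx.add hy).sub (hasDerivAt_id z)).congr_deriv (by ring)

theorem exists_hasDerivAt_kecker_sum_deriv (hx : HasDerivAt x (y z ^ 2 + z * x z + αk) z)
    (hy : HasDerivAt y (-(x z) ^ 2 - z * y z - βk) z) :
    ∃ s₂, HasDerivAt (fun z => (y z - x z) * (x z + y z - z) - (1 - αk + βk)) s₂ z ∧
      2 * (x z + y z - z) * s₂ =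
        ((y z - x z) * (x z + y z - z) - (1 - αk + βk)) ^ 2 - (x z + y z - z) ^ 4
          - 4 * z * (x z + y z - z) ^ 3 - 3 * z ^ 2 * (x z + y z - z) ^ 2
          - 2 * (αk + βk) * (x z + y z - z) ^ 2 - (1 - αk + βk) ^ 2 :=
  ⟨(-(x z ^ 2 + y z ^ 2) - z * (x z + y z) - (αk + βk)) * (x z + y z - z)
      + (y z - x z) * ((y z - x z) * (x z + y z - z) - (1 - αk + βk)),
    (((hy.sub hx).mul (hasDerivAt_kecker_sum hx hy)).sub_const _).congr_deriv
      (by simp only [Pi.sub_apply]; ring),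
    by ring⟩

end Kecker

theorem painleveIV_of_rescaled {c k s s₁ s₂ t δ γ : ℂ} (hc4 : c ^ 4 = -4 / 3)
    (hk : k = 2 / (3 * c)) (hs : s ≠ 0)
    (h : 2 * s * s₂ = s₁ ^ 2 - s ^ 4 - 4 * (c * t) * s ^ 3 - 3 * (c * t) ^ 2 * s ^ 2
      - 2 * δ * s ^ 2 - γ ^ 2) :
    k * c * c * s₂ = (k * c * s₁) ^ 2 / (2 * (k * s)) + 3 / 2 * (k * s) ^ 3
      + 4 * t * (k * s) ^ 2 + 2 * (t ^ 2 - c ^ 2 * δ / 2) * (k * s)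
      + -(2 / 9) * γ ^ 2 / (k * s) := by
  have hc0 : c ≠ 0 := by rintro rfl; norm_num at hc4
  have hk0 : k ≠ 0 := by simp [hk, hc0]
  have h2 : 2 * k = -c ^ 3 := by
    rw [hk]; field_simp; linear_combination 3 * hc4
  have h3 : 3 * k ^ 2 = -c ^ 2 := by
    rw [hk]; field_simp; linear_combination 3 * hc4
  have h9 : 9 * k ^ 2 * c ^ 2 = 4 := by
    rw [hk]; field_simp; ring
  -- `h3`, `h2`, `hc4`, `h9` fix the coefficients of `w³`, `t w²`, `t² w` and `1 / w`.
  field_simp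
  linear_combination 9 * k ^ 2 * c ^ 2 * h - 9 * k ^ 2 * s ^ 4 * h3 - 36 * k ^ 2 * s ^ 3 * t * h2
    - 27 * k ^ 2 * s ^ 2 * t ^ 2 * hc4 - γ ^ 2 * h9

theorem kecker_hamiltonian_system_gives_PIV_general
    (αk βk : ℂ) (V : Set ℂ)
    (hVo : IsOpen V)
    (x y : ℂ → ℂ)
    (hx : ∀ z ∈ V, HasDerivAt x ((y z) ^ 2 + z * x z + αk) z)
    (hy : ∀ z ∈ V, HasDerivAt y (-(x z) ^ 2 - z * y z - βk) z)
    (hne : ∀ z ∈ V, x z + y z - z ≠ 0)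
    (c : ℂ) (hc : c = (1 + I) / Complex.ofReal ((3 : ℝ) ^ ((1 : ℝ) / 4)))
    (U : Set ℂ) (hU : U = {t : ℂ | c * t ∈ V})
    (w : ℂ → ℂ)
    (hw_def : ∀ t, w t = (2 / (3 * c)) * (x (c * t) + y (c * t) - c * t))
    (α β : ℂ)
    (hα : α = (I / (Real.sqrt 3 : ℂ)) * (αk + βk))
    (hβ : β = -(2 / 9) * (1 - αk + βk) ^ 2) :
    ∀ t ∈ U, DifferentiableAt ℂ w t ∧ DifferentiableAt ℂ (deriv w) t ∧
      deriv (deriv w) t =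
        (deriv w t) ^ 2 / (2 * w t) + 3 / 2 * (w t) ^ 3 + 4 * t * (w t) ^ 2
          + 2 * (t ^ 2 - α) * w t + β / w t := by
  intro t ht
  subst hU
  have hα' : α = c ^ 2 * (αk + βk) / 2 := by rw [hα, hc, kecker_scale_sq]; ring
  have hw1 : ∀ᶠ u in 𝓝 t, HasDerivAt w (2 / (3 * c) * c *
      ((y (c * u) - x (c * u)) * (x (c * u) + y (c * u) - c * u) - (1 - αk + βk))) u := by
    filter_upwards [(hVo.preimage (continuous_const_mul c)).mem_nhds ht] with u hu
    rw [funext hw_def]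
    exact (hasDerivAt_kecker_sum (hx _ hu) (hy _ hu)).const_mul_comp_const_mul
  obtain ⟨s₂, hs₂, hode⟩ := exists_hasDerivAt_kecker_sum_deriv (hx _ ht) (hy _ ht)
  have hw2 :=
    (hs₂.const_mul_comp_const_mul (k := 2 / (3 * c) * c)).deriv_of_eventually_hasDerivAt hw1
  refine ⟨hw1.self_of_nhds.differentiableAt, hw2.differentiableAt, ?_⟩
  rw [hw2.deriv, hw1.self_of_nhds.deriv, hw_def, hα', hβ]
  exact painleveIV_of_rescaled (hc ▸ kecker_scale_pow_four) rfl (hne _ ht) hode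

/-- a solution `(x, y)` of the Kecker Hamiltonian system for P_IV with
parameters `α̃, β̃` (with `x + y − z` nonvanishing) yields, via
`w(t) = (2/(3c))(x(ct) + y(ct) − ct)` with `c = (1+i)/3^(1/4)`, a solution `w` of
the fourth Painlevé equation with parameters `α = (i/√3)(α̃ + β̃)`,
`β = −(2/9)(1 − α̃ + β̃)²`. -/
theorem kecker_hamiltonian_system_gives_PIV
    (αk βk : ℂ) (V : Set ℂ)
    (hVo : IsOpen V) (hVne : V.Nonempty) (hVc : IsPreconnected V)
    (x y : ℂ → ℂ)
    (hx : ∀ z ∈ V, HasDerivAt x ((y z) ^ 2 + z * x z + αk) z)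
    (hy : ∀ z ∈ V, HasDerivAt y (-(x z) ^ 2 - z * y z - βk) z)
    (hne : ∀ z ∈ V, x z + y z - z ≠ 0)
    (c : ℂ) (hc : c = (1 + I) / Complex.ofReal ((3 : ℝ) ^ ((1 : ℝ) / 4)))
    (U : Set ℂ) (hU : U = {t : ℂ | c * t ∈ V})
    (w : ℂ → ℂ)
    (hw_def : ∀ t, w t = (2 / (3 * c)) * (x (c * t) + y (c * t) - c * t))
    (α β : ℂ)
    (hα : α = (I / (Real.sqrt 3 : ℂ)) * (αk + βk))
    (hβ : β = -(2 / 9) * (1 - αk + βk) ^ 2) :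
    ∀ t ∈ U, DifferentiableAt ℂ w t ∧ DifferentiableAt ℂ (deriv w) t ∧
      deriv (deriv w) t =
        (deriv w t) ^ 2 / (2 * w t) + 3 / 2 * (w t) ^ 3 + 4 * t * (w t) ^ 2
          + 2 * (t ^ 2 - α) * w t + β / w t :=
  kecker_hamiltonian_system_gives_PIV_general αk βk V hVo x y hx hy hne c hc U hU w hw_def α β hα hβ
end

section
/- Let α, β ∈ ℂ, let U ⊆ ℂ be a nonempty open connected set, and let q, p : U → ℂ be differentiable functions with q(t) ≠ 0 for all t ∈ U that solve the Takasaki Hamiltonian system for P_IV: q'(t) = p(t) and p'(t) = (1/2)(3(q(t)/2)⁵ + 8t(q(t)/2)³ + 4(t² − α)(q(t)/2) + 2β(q(t)/2)⁻³) on U. Then the function w(t) = (q(t)/2)² is twice differentiable and satisfies the fourth Painlevé equation w'' = (w')²/(2w) + (3/2)w³ + 4t·w² + 2(t² − α)w + β/w on U. -/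
open Complex

/-!
With `w = (q/2)²` and `q' = p` one has `w' = q p / 2` and `w'' = (p² + q p') / 2`.
Since `w = q² / 4`, the first summand `p² / 2` is exactly `(w')² / (2w)`, and inserting the
Hamiltonian equation for `p'` turns `q p' / 2` into the remaining polynomial and `β / w` terms of P_IV.
-/

noncomputable def painleveIVRhs (α β t w w' : ℂ) : ℂ :=
  w' ^ 2 / (2 * w) + 3 / 2 * w ^ 3 + 4 * t * w ^ 2 + 2 * (t ^ 2 - α) * w + β / w

/-- The force `-∂V/∂q` of the Takasaki Hamiltonian system for P_IV. -/
noncomputable def takasakiForce (α β t q : ℂ) : ℂ :=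
  (1 / 2) * (3 * (q / 2) ^ 5 + 8 * t * (q / 2) ^ 3 + 4 * (t ^ 2 - α) * (q / 2)
    + 2 * β / (q / 2) ^ 3)

theorem half_add_mul_takasakiForce_eq_painleveIVRhs (α β t q p : ℂ) (hq : q ≠ 0) :
    (p * p + q * takasakiForce α β t q) / 2 = painleveIVRhs α β t ((q / 2) ^ 2) (q * p / 2) := by
  unfold takasakiForce painleveIVRhs
  field_simp
  ring

section

variable {𝕜 : Type*} [NontriviallyNormedField 𝕜]

theorem HasDerivAt.half_sq [CharZero 𝕜] {q : 𝕜 → 𝕜} {p t : 𝕜} (hq : HasDerivAt q p t) :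
    HasDerivAt (fun s => (q s / 2) ^ 2) (q t * p / 2) t :=
  ((hq.div_const 2).fun_pow 2).congr_deriv (by field_simp; ring)

theorem hasDerivAt_deriv_of_isOpen {f g : 𝕜 → 𝕜} {U : Set 𝕜} {t g' : 𝕜} (hU : IsOpen U)
    (ht : t ∈ U) (hf : ∀ s ∈ U, HasDerivAt f (g s) s) (hg : HasDerivAt g g' t) :
    HasDerivAt (deriv f) g' t :=
  hg.congr_of_eventuallyEq <| by
    filter_upwards [hU.mem_nhds ht] with s hs using (hf s hs).deriv

end

theorem takasaki_hamiltonian_system_gives_PIV_general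
    (α β : ℂ) (U : Set ℂ)
    (hUo : IsOpen U)
    (q p : ℂ → ℂ)
    (hq0 : ∀ t ∈ U, q t ≠ 0)
    (hq : ∀ t ∈ U, HasDerivAt q (p t) t)
    (hp : ∀ t ∈ U, HasDerivAt p
      ((1 / 2) * (3 * (q t / 2) ^ 5 + 8 * t * (q t / 2) ^ 3 + 4 * (t ^ 2 - α) * (q t / 2)
        + 2 * β / (q t / 2) ^ 3)) t)
    (w : ℂ → ℂ) (hw_def : ∀ t, w t = (q t / 2) ^ 2) :
    ∀ t ∈ U, DifferentiableAt ℂ w t ∧ DifferentiableAt ℂ (deriv w) t ∧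
      deriv (deriv w) t =
        (deriv w t) ^ 2 / (2 * w t) + 3 / 2 * (w t) ^ 3 + 4 * t * (w t) ^ 2
          + 2 * (t ^ 2 - α) * w t + β / w t := by
  intro t ht
  obtain rfl : w = fun s => (q s / 2) ^ 2 := funext hw_def
  have hw' : ∀ s ∈ U, HasDerivAt (fun s => (q s / 2) ^ 2) (q s * p s / 2) s :=
    fun s hs => (hq s hs).half_sq
  have hw'' : HasDerivAt (deriv fun s => (q s / 2) ^ 2)
      ((p t * p t + q t * takasakiForce α β t (q t)) / 2) t :=
    hasDerivAt_deriv_of_isOpen hUo ht hw' (((hq t ht).mul (hp t ht)).div_const 2)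
  refine ⟨(hw' t ht).differentiableAt, hw''.differentiableAt, ?_⟩
  rw [hw''.deriv, (hw' t ht).deriv]
  exact half_add_mul_takasakiForce_eq_painleveIVRhs α β t (q t) (p t) (hq0 t ht)

/-- a solution `(q, p)` of the Takasaki Hamiltonian system for P_IV with
parameters `α, β` (with `q` nonvanishing) yields, via `w = (q/2)²`, a solution of the
fourth Painlevé equation with the same parameters. -/
theorem takasaki_hamiltonian_system_gives_PIV
    (α β : ℂ) (U : Set ℂ)
    (hUo : IsOpen U) (hUne : U.Nonempty) (hUc : IsPreconnected U)
    (q p : ℂ → ℂ)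
    (hq0 : ∀ t ∈ U, q t ≠ 0)
    (hq : ∀ t ∈ U, HasDerivAt q (p t) t)
    (hp : ∀ t ∈ U, HasDerivAt p
      ((1 / 2) * (3 * (q t / 2) ^ 5 + 8 * t * (q t / 2) ^ 3 + 4 * (t ^ 2 - α) * (q t / 2)
        + 2 * β / (q t / 2) ^ 3)) t)
    (w : ℂ → ℂ) (hw_def : ∀ t, w t = (q t / 2) ^ 2) :
    ∀ t ∈ U, DifferentiableAt ℂ w t ∧ DifferentiableAt ℂ (deriv w) t ∧
      deriv (deriv w) t =
        (deriv w t) ^ 2 / (2 * w t) + 3 / 2 * (w t) ^ 3 + 4 * t * (w t) ^ 2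
          + 2 * (t ^ 2 - α) * w t + β / w t :=
  takasaki_hamiltonian_system_gives_PIV_general α β U hUo q p hq0 hq hp w hw_def
end

section
/- Let κ₀, θ∞ ∈ ℂ and set α = 1 + 2θ∞ − κ₀ and β = −2κ₀². Let U ⊆ ℂ be a nonempty open connected set and let q, p : U → ℂ be differentiable functions with q(t) ≠ 0 for all t ∈ U that solve the Takasaki Hamiltonian system for P_IV with parameters α, β. Define f(t) = (q(t)/2)² and g(t) = t/2 + 2κ₀/q(t)² + p(t)/(2q(t)) + q(t)²/16. Then f, g are differentiable and solve the Okamoto Hamiltonian system for P_IV with parameters κ₀, θ∞ on U. -/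
/-!
With `f = (q/2)²` one has `f' = q p / 2`, and the choice of `g` is exactly what makes
`4fg − f² − 2tf − 2κ₀` collapse to `q p / 2` identically. Differentiating `g`, eliminating `p'`
by the Takasaki equation and clearing denominators, the second Okamoto equation becomes a
polynomial identity in `q, p, t`, which holds for `α = 1 + 2θ∞ − κ₀`, `β = −2κ₀²`.
-/

open Complex

noncomputable section

namespace PIV

def fCoord (q : ℂ) : ℂ := (q / 2) ^ 2

def gCoord (κ₀ t q p : ℂ) : ℂ := t / 2 + 2 * κ₀ / q ^ 2 + p / (2 * q) + q ^ 2 / 16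

/-- `-∂V/∂q` for the Takasaki potential `V`. -/
def takasakiForce (α β t q : ℂ) : ℂ :=
  (1 / 2) * (3 * (q / 2) ^ 5 + 8 * t * (q / 2) ^ 3 + 4 * (t ^ 2 - α) * (q / 2)
    + 2 * β / (q / 2) ^ 3)

def okamotoRhsF (κ₀ t f g : ℂ) : ℂ := 4 * f * g - f ^ 2 - 2 * t * f - 2 * κ₀

def okamotoRhsG (θoo t f g : ℂ) : ℂ := -2 * g ^ 2 + 2 * f * g + 2 * t * g - θoo

theorem hasDerivAt_fCoord {q : ℂ → ℂ} {q' t : ℂ} (hq : HasDerivAt q q' t) :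
    HasDerivAt (fun s => fCoord (q s)) (q t * q' / 2) t := by
  refine ((hq.div_const 2).fun_pow 2).congr_deriv ?_
  push_cast
  ring

theorem hasDerivAt_gCoord (κ₀ : ℂ) {q p : ℂ → ℂ} {q' p' t : ℂ} (hq : HasDerivAt q q' t)
    (hp : HasDerivAt p p' t) (hq0 : q t ≠ 0) :
    HasDerivAt (fun s => gCoord κ₀ s (q s) (p s))
      (1 / 2 - 4 * κ₀ * q' / q t ^ 3 + (p' * q t - p t * q') / (2 * q t ^ 2)
        + q t * q' / 8) t := by
  have hsq : q t ^ 2 ≠ 0 := pow_ne_zero 2 hq0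
  have htwice : 2 * q t ≠ 0 := mul_ne_zero two_ne_zero hq0
  refine ((((hasDerivAt_id t).div_const 2).add
    ((hasDerivAt_const t (2 * κ₀)).fun_div (hq.fun_pow 2) hsq)).add
    (hp.fun_div (hq.const_mul 2) htwice)).add ((hq.fun_pow 2).div_const 16) |>.congr_deriv ?_
  field_simp
  ring

theorem okamotoRhsF_coords (κ₀ t q p : ℂ) (hq : q ≠ 0) :
    okamotoRhsF κ₀ t (fCoord q) (gCoord κ₀ t q p) = q * p / 2 := by
  unfold okamotoRhsF fCoord gCoord
  field_simp
  ring

theorem okamotoRhsG_coords (κ₀ θoo t q p : ℂ) (hq : q ≠ 0) :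
    okamotoRhsG θoo t (fCoord q) (gCoord κ₀ t q p) =
      1 / 2 - 4 * κ₀ * p / q ^ 3
        + (takasakiForce (1 + 2 * θoo - κ₀) (-2 * κ₀ ^ 2) t q * q - p * p) / (2 * q ^ 2)
        + q * p / 8 := by
  unfold okamotoRhsG fCoord gCoord takasakiForce
  field_simp
  ring

end PIV

end

open PIV in
theorem takasaki_to_okamoto_PIV_general
    (κ₀ θoo α β : ℂ)
    (hα : α = 1 + 2 * θoo - κ₀) (hβ : β = -2 * κ₀ ^ 2)
    (U : Set ℂ)
    (q p : ℂ → ℂ)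
    (hq0 : ∀ t ∈ U, q t ≠ 0)
    (hq : ∀ t ∈ U, HasDerivAt q (p t) t)
    (hp : ∀ t ∈ U, HasDerivAt p
      ((1 / 2) * (3 * (q t / 2) ^ 5 + 8 * t * (q t / 2) ^ 3 + 4 * (t ^ 2 - α) * (q t / 2)
        + 2 * β / (q t / 2) ^ 3)) t)
    (f g : ℂ → ℂ)
    (hf_def : ∀ t, f t = (q t / 2) ^ 2)
    (hg_def : ∀ t, g t = t / 2 + 2 * κ₀ / (q t) ^ 2 + p t / (2 * q t) + (q t) ^ 2 / 16) :
    ∀ t ∈ U,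
      HasDerivAt f (4 * f t * g t - (f t) ^ 2 - 2 * t * f t - 2 * κ₀) t ∧
      HasDerivAt g (-2 * (g t) ^ 2 + 2 * f t * g t + 2 * t * g t - θoo) t := by
  have hf : f = fun s => fCoord (q s) := funext hf_def
  have hg : g = fun s => gCoord κ₀ s (q s) (p s) := funext hg_def
  subst hf hg hα hβ
  intro t ht
  exact ⟨(hasDerivAt_fCoord (hq t ht)).congr_deriv (okamotoRhsF_coords κ₀ t _ _ (hq0 t ht)).symm,
    (hasDerivAt_gCoord κ₀ (hq t ht) (hp t ht) (hq0 t ht)).congr_deriv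
      (okamotoRhsG_coords κ₀ θoo t _ _ (hq0 t ht)).symm⟩

/-- the algebraic change of variables `f = (q/2)²`,
`g = t/2 + 2κ₀/q² + p/(2q) + q²/16` maps solutions of the Takasaki Hamiltonian system
for P_IV with parameters `α = 1 + 2θ∞ − κ₀`, `β = −2κ₀²` to solutions of the Okamoto
Hamiltonian system for P_IV with parameters `κ₀, θ∞`. -/
theorem takasaki_to_okamoto_PIV
    (κ₀ θoo α β : ℂ)
    (hα : α = 1 + 2 * θoo - κ₀) (hβ : β = -2 * κ₀ ^ 2)
    (U : Set ℂ)
    (hUo : IsOpen U) (hUne : U.Nonempty) (hUc : IsPreconnected U)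
    (q p : ℂ → ℂ)
    (hq0 : ∀ t ∈ U, q t ≠ 0)
    (hq : ∀ t ∈ U, HasDerivAt q (p t) t)
    (hp : ∀ t ∈ U, HasDerivAt p
      ((1 / 2) * (3 * (q t / 2) ^ 5 + 8 * t * (q t / 2) ^ 3 + 4 * (t ^ 2 - α) * (q t / 2)
        + 2 * β / (q t / 2) ^ 3)) t)
    (f g : ℂ → ℂ)
    (hf_def : ∀ t, f t = (q t / 2) ^ 2)
    (hg_def : ∀ t, g t = t / 2 + 2 * κ₀ / (q t) ^ 2 + p t / (2 * q t) + (q t) ^ 2 / 16) :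
    ∀ t ∈ U,
      HasDerivAt f (4 * f t * g t - (f t) ^ 2 - 2 * t * f t - 2 * κ₀) t ∧
      HasDerivAt g (-2 * (g t) ^ 2 + 2 * f t * g t + 2 * t * g t - θoo) t :=
  takasaki_to_okamoto_PIV_general κ₀ θoo α β hα hβ U q p hq0 hq hp f g hf_def hg_def
end

section
/- Let κ₀, κ∞, θ, η ∈ ℂ and set κ = ((κ₀ + θ)² − κ∞²)/4. Let U ⊆ ℂ ∖ {0} be a nonempty open connected set and let f, g : U → ℂ be differentiable functions with f(t) ∉ {0, 1} for all t ∈ U that solve the Okamoto Hamiltonian system for P_V: f'(t) = (1/t)((f−1)²(2fg − κ₀) − f(θ(f−1) + tη)) and g'(t) = −(1/t)(g·((f−1)(3fg − g − 2κ₀ − θ) − (θf + tη)) + κ) on U. Then f is twice differentiable and satisfies the fifth Painlevé equation f'' = (1/(2f) + 1/(f−1))(f')² − f'/t + ((f−1)²/t²)(α·f + β/f) + γ·f/t + δ·f(f+1)/(f−1) on U with parameters α = κ∞²/2, β = −κ₀²/2, γ = −η(θ + 1), δ = −η²/2. -/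
/-!
On `U` the derivative of `f` is `F(t, f, g)` for the rational right-hand side `F` of the system,
so `f'` is itself differentiable and the chain rule expresses `f''` through `t, f, g, f', g'`.
Substituting `f'` and `g'` from the system, the claimed equation becomes an identity of rational
functions in `t, f, g` (with `f'` replaced by `F(t, f, g)` on the Painlevé side), which holds once
`κ = ((κ₀ + θ)² − κ∞²)/4` is inserted.
-/

open Complex

noncomputable section

namespace OkamotoPV

def fieldF (κ₀ θ η t x y : ℂ) : ℂ :=
  (1 / t) * ((x - 1) ^ 2 * (2 * x * y - κ₀) - x * (θ * (x - 1) + t * η))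

def fieldG (κ₀ θ η κ t x y : ℂ) : ℂ :=
  -(1 / t) * (y * ((x - 1) * (3 * x * y - y - 2 * κ₀ - θ) - (θ * x + t * η)) + κ)

-- The last term `-fieldF / t` is the contribution of the factor `1 / t` of `fieldF`.
def fieldFDeriv (κ₀ θ η t x y x' y' : ℂ) : ℂ :=
  (2 * (x - 1) * x' * (2 * x * y - κ₀) + (x - 1) ^ 2 * (2 * (x' * y + x * y'))
    - x' * (θ * (x - 1) + t * η) - x * (θ * x' + η) - fieldF κ₀ θ η t x y) / t

def painleveVRhs (α β γ δ t w w' : ℂ) : ℂ :=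
  (1 / (2 * w) + 1 / (w - 1)) * w' ^ 2 - w' / t + ((w - 1) ^ 2 / t ^ 2) * (α * w + β / w)
    + γ * w / t + δ * w * (w + 1) / (w - 1)

theorem hasDerivAt_fieldF_comp {κ₀ θ η t x' y' : ℂ} {f g : ℂ → ℂ} (ht : t ≠ 0)
    (hf : HasDerivAt f x' t) (hg : HasDerivAt g y' t) :
    HasDerivAt (fun s => fieldF κ₀ θ η s (f s) (g s))
      (fieldFDeriv κ₀ θ η t (f t) (g t) x' y') t := by
  have hQ := (((hf.sub_const 1).pow 2).mul (((hf.const_mul 2).mul hg).sub_const κ₀)).sub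
    (hf.mul (((hf.sub_const 1).const_mul θ).add ((hasDerivAt_id t).mul_const η)))
  refine ((((hasDerivAt_id t).inv ht).mul hQ).congr_of_eventuallyEq
    (Filter.Eventually.of_forall fun s => ?_)).congr_deriv ?_
  · simp [fieldF]
  · simp only [fieldFDeriv, fieldF, Pi.mul_apply, Pi.sub_apply, Pi.add_apply, Pi.pow_apply,
      Pi.inv_apply, id_eq]
    field_simp
    ring

theorem fieldFDeriv_eq_painleveVRhs {κ₀ κoo θ η κ t x y : ℂ}
    (hκ : κ = ((κ₀ + θ) ^ 2 - κoo ^ 2) / 4) (ht : t ≠ 0) (hx0 : x ≠ 0) (hx1 : x ≠ 1) :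
    fieldFDeriv κ₀ θ η t x y (fieldF κ₀ θ η t x y) (fieldG κ₀ θ η κ t x y) =
      painleveVRhs (κoo ^ 2 / 2) (-κ₀ ^ 2 / 2) (-η * (θ + 1)) (-η ^ 2 / 2) t x
        (fieldF κ₀ θ η t x y) := by
  have hx1' : x - 1 ≠ 0 := sub_ne_zero.mpr hx1
  subst hκ
  simp only [fieldFDeriv, painleveVRhs, fieldF, fieldG]
  field_simp
  ring

end OkamotoPV

end

open OkamotoPV in
theorem okamoto_hamiltonian_system_gives_PV_general
    (κ₀ κoo θ η κ : ℂ) (hκ : κ = ((κ₀ + θ) ^ 2 - κoo ^ 2) / 4)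
    (U : Set ℂ)
    (hUo : IsOpen U)
    (hU0 : ∀ t ∈ U, t ≠ 0)
    (f g : ℂ → ℂ)
    (hf01 : ∀ t ∈ U, f t ≠ 0 ∧ f t ≠ 1)
    (hf : ∀ t ∈ U, HasDerivAt f
      ((1 / t) * ((f t - 1) ^ 2 * (2 * f t * g t - κ₀)
        - f t * (θ * (f t - 1) + t * η))) t)
    (hg : ∀ t ∈ U, HasDerivAt g
      (-(1 / t) * (g t * ((f t - 1) * (3 * f t * g t - g t - 2 * κ₀ - θ)
        - (θ * f t + t * η)) + κ)) t)
    (α β γ δ : ℂ)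
    (hα : α = κoo ^ 2 / 2) (hβ : β = -κ₀ ^ 2 / 2)
    (hγ : γ = -η * (θ + 1)) (hδ : δ = -η ^ 2 / 2) :
    ∀ t ∈ U, DifferentiableAt ℂ f t ∧ DifferentiableAt ℂ (deriv f) t ∧
      deriv (deriv f) t =
        (1 / (2 * f t) + 1 / (f t - 1)) * (deriv f t) ^ 2 - deriv f t / t
          + ((f t - 1) ^ 2 / t ^ 2) * (α * f t + β / f t)
          + γ * f t / t + δ * f t * (f t + 1) / (f t - 1) := by
  intro t ht
  obtain ⟨hf0, hf1⟩ := hf01 t ht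
  have hderiv_eq : deriv f =ᶠ[nhds t] fun s => fieldF κ₀ θ η s (f s) (g s) := by
    filter_upwards [hUo.mem_nhds ht] with s hs using (hf s hs).deriv
  have hf' : HasDerivAt (deriv f)
      (fieldFDeriv κ₀ θ η t (f t) (g t) (fieldF κ₀ θ η t (f t) (g t))
        (fieldG κ₀ θ η κ t (f t) (g t))) t :=
    (hasDerivAt_fieldF_comp (hU0 t ht) (hf t ht) (hg t ht)).congr_of_eventuallyEq hderiv_eq
  refine ⟨(hf t ht).differentiableAt, hf'.differentiableAt, ?_⟩
  rw [hf'.deriv, (hf t ht).deriv, hα, hβ, hγ, hδ]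
  exact fieldFDeriv_eq_painleveVRhs hκ (hU0 t ht) hf0 hf1

/-- a solution `(f, g)` of the Okamoto Hamiltonian system for P_V with
parameters `κ₀, κ∞, θ, η` (with `f` omitting the values 0 and 1, on a domain avoiding 0)
yields a solution `f` of the fifth Painlevé equation with parameters
`α = κ∞²/2`, `β = −κ₀²/2`, `γ = −η(θ + 1)`, `δ = −η²/2`. -/
theorem okamoto_hamiltonian_system_gives_PV
    (κ₀ κoo θ η κ : ℂ) (hκ : κ = ((κ₀ + θ) ^ 2 - κoo ^ 2) / 4)
    (U : Set ℂ)
    (hUo : IsOpen U) (hUne : U.Nonempty) (hUc : IsPreconnected U)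
    (hU0 : ∀ t ∈ U, t ≠ 0)
    (f g : ℂ → ℂ)
    (hf01 : ∀ t ∈ U, f t ≠ 0 ∧ f t ≠ 1)
    (hf : ∀ t ∈ U, HasDerivAt f
      ((1 / t) * ((f t - 1) ^ 2 * (2 * f t * g t - κ₀)
        - f t * (θ * (f t - 1) + t * η))) t)
    (hg : ∀ t ∈ U, HasDerivAt g
      (-(1 / t) * (g t * ((f t - 1) * (3 * f t * g t - g t - 2 * κ₀ - θ)
        - (θ * f t + t * η)) + κ)) t)
    (α β γ δ : ℂ)
    (hα : α = κoo ^ 2 / 2) (hβ : β = -κ₀ ^ 2 / 2)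
    (hγ : γ = -η * (θ + 1)) (hδ : δ = -η ^ 2 / 2) :
    ∀ t ∈ U, DifferentiableAt ℂ f t ∧ DifferentiableAt ℂ (deriv f) t ∧
      deriv (deriv f) t =
        (1 / (2 * f t) + 1 / (f t - 1)) * (deriv f t) ^ 2 - deriv f t / t
          + ((f t - 1) ^ 2 / t ^ 2) * (α * f t + β / f t)
          + γ * f t / t + δ * f t * (f t + 1) / (f t - 1) :=
  okamoto_hamiltonian_system_gives_PV_general κ₀ κoo θ η κ hκ U hUo hU0 f g hf01 hf hg α β γ δ hα hβ
    hγ hδ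
end

section
/- Let κ₀, κ∞, θ ∈ ℂ and set η = −1 and κ = ((κ₀ + θ)² − κ∞²)/4. Let U ⊆ ℂ ∖ {0} be a nonempty open connected set and let f, g : U → ℂ be differentiable functions with f(t) ≠ 1 for all t ∈ U that solve the Okamoto Hamiltonian system for P_V with parameters κ₀, κ∞, θ, η = −1. Define q(t) = 1/(1 − f(t)) and p(t) = (f(t) − 1)(2(f(t) − 1)g(t) − θ − κ₀ + κ∞)/2. Then q, p are differentiable and solve the Kajiwara–Noumi–Yamada Hamiltonian system for P_V on U with parameters a₀ = 1 + (θ − κ₀ + κ∞)/2, a₁ = −κ∞, a₂ = −(θ + κ₀ − κ∞)/2, a₃ = κ₀ (which satisfy a₀ + a₁ + a₂ + a₃ = 1). -/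
/-!
Both systems are first order, so the claim is the chain rule: `q' = f' / (1 - f)²` and `p'` is
given by the product rule in `f, g, f', g'`. Substituting the Okamoto equations for `f'` and `g'`
turns these into the Kajiwara–Noumi–Yamada right-hand sides; this is a rational identity in
`t, f, g`, valid wherever `t ≠ 0` and `f ≠ 1`, and it is the specialisation `η = -1` together with
`κ = ((κ₀ + θ)² - κ∞²) / 4` that makes it hold.
-/

namespace PainleveV

section VectorFields

variable {K : Type*} [Field K]

def okamotoF (κ₀ θ η t f g : K) : K :=
  (1 / t) * ((f - 1) ^ 2 * (2 * f * g - κ₀) - f * (θ * (f - 1) + t * η))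

def okamotoG (κ₀ θ η κ t f g : K) : K :=
  -(1 / t) * (g * ((f - 1) * (3 * f * g - g - 2 * κ₀ - θ) - (θ * f + t * η)) + κ)

def knyQ (a₁ a₃ t q p : K) : K :=
  (1 / t) * (q * (q - 1) * (2 * p + t) - a₁ * (q - 1) - a₃ * q)

def knyP (a₁ a₂ a₃ t q p : K) : K :=
  (1 / t) * (p * (p + t) * (1 - 2 * q) + (a₁ + a₃) * p - a₂ * t)

def toKnyQ (f : K) : K :=
  1 / (1 - f)

def toKnyP (θ κ₀ κoo f g : K) : K :=
  (f - 1) * (2 * (f - 1) * g - θ - κ₀ + κoo) / 2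

variable [CharZero K]

theorem knyQ_toKny_eq (κ₀ κoo θ g : K) {t f : K} (ht : t ≠ 0) (hf : f ≠ 1) :
    knyQ (-κoo) κ₀ t (toKnyQ f) (toKnyP θ κ₀ κoo f g) = okamotoF κ₀ θ (-1) t f g / (1 - f) ^ 2 := by
  have hf' : 1 - f ≠ 0 := sub_ne_zero.mpr hf.symm
  unfold knyQ okamotoF toKnyQ toKnyP
  field_simp
  ring

theorem knyP_toKny_eq (κ₀ κoo θ g : K) {t f : K} (ht : t ≠ 0) (hf : f ≠ 1) :
    knyP (-κoo) (-(θ + κ₀ - κoo) / 2) κ₀ t (toKnyQ f) (toKnyP θ κ₀ κoo f g) =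
      (okamotoF κ₀ θ (-1) t f g * (2 * (f - 1) * g - θ - κ₀ + κoo) +
        (f - 1) * (2 * okamotoF κ₀ θ (-1) t f g * g +
          2 * (f - 1) * okamotoG κ₀ θ (-1) (((κ₀ + θ) ^ 2 - κoo ^ 2) / 4) t f g)) / 2 := by
  have hf' : 1 - f ≠ 0 := sub_ne_zero.mpr hf.symm
  unfold knyP okamotoF okamotoG toKnyQ toKnyP
  field_simp
  ring

end VectorFields

section Derivatives

variable {𝕜 : Type*} [NontriviallyNormedField 𝕜] {f g : 𝕜 → 𝕜} {f' g' x : 𝕜}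

theorem hasDerivAt_toKnyQ (hf : HasDerivAt f f' x) (hx : f x ≠ 1) :
    HasDerivAt (fun s => toKnyQ (f s)) (f' / (1 - f x) ^ 2) x := by
  simpa only [toKnyQ, one_div, neg_div, neg_neg] using
    (hf.const_sub 1).fun_inv (sub_ne_zero.mpr hx.symm)

theorem hasDerivAt_toKnyP (θ κ₀ κoo : 𝕜) (hf : HasDerivAt f f' x) (hg : HasDerivAt g g' x) :
    HasDerivAt (fun s => toKnyP θ κ₀ κoo (f s) (g s))
      ((f' * (2 * (f x - 1) * g x - θ - κ₀ + κoo) +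
        (f x - 1) * (2 * f' * g x + 2 * (f x - 1) * g')) / 2) x := by
  have hf₁ := hf.sub_const 1
  exact (hf₁.fun_mul ((((hf₁.const_mul 2).fun_mul hg).sub_const θ).sub_const κ₀
    |>.add_const κoo)).div_const 2

end Derivatives

end PainleveV

open PainleveV

theorem okamoto_to_kny_PV_general
    (κ₀ κoo θ η κ : ℂ) (hη : η = -1) (hκ : κ = ((κ₀ + θ) ^ 2 - κoo ^ 2) / 4)
    (U : Set ℂ)
    (hU0 : ∀ t ∈ U, t ≠ 0)
    (f g : ℂ → ℂ)
    (hf1 : ∀ t ∈ U, f t ≠ 1)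
    (hf : ∀ t ∈ U, HasDerivAt f
      ((1 / t) * ((f t - 1) ^ 2 * (2 * f t * g t - κ₀)
        - f t * (θ * (f t - 1) + t * η))) t)
    (hg : ∀ t ∈ U, HasDerivAt g
      (-(1 / t) * (g t * ((f t - 1) * (3 * f t * g t - g t - 2 * κ₀ - θ)
        - (θ * f t + t * η)) + κ)) t)
    (a₁ a₂ a₃ : ℂ)
    (ha₁ : a₁ = -κoo)
    (ha₂ : a₂ = -(θ + κ₀ - κoo) / 2) (ha₃ : a₃ = κ₀)
    (q p : ℂ → ℂ)
    (hq_def : ∀ t, q t = 1 / (1 - f t))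
    (hp_def : ∀ t, p t = (f t - 1) * (2 * (f t - 1) * g t - θ - κ₀ + κoo) / 2) :
    ∀ t ∈ U,
      HasDerivAt q
        ((1 / t) * (q t * (q t - 1) * (2 * p t + t) - a₁ * (q t - 1) - a₃ * q t)) t ∧
      HasDerivAt p
        ((1 / t) * (p t * (p t + t) * (1 - 2 * q t) + (a₁ + a₃) * p t - a₂ * t)) t := by
  obtain rfl : q = fun s => toKnyQ (f s) := funext hq_def
  obtain rfl : p = fun s => toKnyP θ κ₀ κoo (f s) (g s) := funext hp_def
  subst η κ a₁ a₂ a₃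
  intro t ht
  exact ⟨(hasDerivAt_toKnyQ (hf t ht) (hf1 t ht)).congr_deriv
      (knyQ_toKny_eq κ₀ κoo θ (g t) (hU0 t ht) (hf1 t ht)).symm,
    (hasDerivAt_toKnyP θ κ₀ κoo (hf t ht) (hg t ht)).congr_deriv
      (knyP_toKny_eq κ₀ κoo θ (g t) (hU0 t ht) (hf1 t ht)).symm⟩

/-- the change of variables `q = 1/(1 − f)`,
`p = (f − 1)(2(f − 1)g − θ − κ₀ + κ∞)/2` maps solutions of the Okamoto Hamiltonian
system for P_V (with `η = −1`) to solutions of the Kajiwara–Noumi–Yamada Hamiltonian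
system for P_V with root variables `a₀ = 1 + (θ − κ₀ + κ∞)/2`, `a₁ = −κ∞`,
`a₂ = −(θ + κ₀ − κ∞)/2`, `a₃ = κ₀`. -/
theorem okamoto_to_kny_PV
    (κ₀ κoo θ η κ : ℂ) (hη : η = -1) (hκ : κ = ((κ₀ + θ) ^ 2 - κoo ^ 2) / 4)
    (U : Set ℂ)
    (hUo : IsOpen U) (hUne : U.Nonempty) (hUc : IsPreconnected U)
    (hU0 : ∀ t ∈ U, t ≠ 0)
    (f g : ℂ → ℂ)
    (hf1 : ∀ t ∈ U, f t ≠ 1)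
    (hf : ∀ t ∈ U, HasDerivAt f
      ((1 / t) * ((f t - 1) ^ 2 * (2 * f t * g t - κ₀)
        - f t * (θ * (f t - 1) + t * η))) t)
    (hg : ∀ t ∈ U, HasDerivAt g
      (-(1 / t) * (g t * ((f t - 1) * (3 * f t * g t - g t - 2 * κ₀ - θ)
        - (θ * f t + t * η)) + κ)) t)
    (a₀ a₁ a₂ a₃ : ℂ)
    (ha₀ : a₀ = 1 + (θ - κ₀ + κoo) / 2) (ha₁ : a₁ = -κoo)
    (ha₂ : a₂ = -(θ + κ₀ - κoo) / 2) (ha₃ : a₃ = κ₀)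
    (hsum : a₀ + a₁ + a₂ + a₃ = 1)
    (q p : ℂ → ℂ)
    (hq_def : ∀ t, q t = 1 / (1 - f t))
    (hp_def : ∀ t, p t = (f t - 1) * (2 * (f t - 1) * g t - θ - κ₀ + κoo) / 2) :
    ∀ t ∈ U,
      HasDerivAt q
        ((1 / t) * (q t * (q t - 1) * (2 * p t + t) - a₁ * (q t - 1) - a₃ * q t)) t ∧
      HasDerivAt p
        ((1 / t) * (p t * (p t + t) * (1 - 2 * q t) + (a₁ + a₃) * p t - a₂ * t)) t :=
  okamoto_to_kny_PV_general κ₀ κoo θ η κ hη hκ U hU0 f g hf1 hf hg a₁ a₂ a₃ ha₁ ha₂ ha₃ q p hq_def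
    hp_def
end

section
/- Let κ₀, κ∞, θ ∈ ℂ and set η = −1 and κ = ((κ₀ + θ)² − κ∞²)/4. Let U ⊆ ℂ ∖ {0} be a nonempty open connected set and let f, g : U → ℂ be differentiable functions with f(t) ≠ 0 for all t ∈ U that solve the Okamoto Hamiltonian system for P_V with parameters κ₀, κ∞, θ, η = −1. Define y(t) = f(t) and z(t) = (θ + κ₀ + κ∞)/2 − f(t)g(t). Then y, z are differentiable and solve the Jimbo–Miwa Hamiltonian system for P_V on U with parameters Θ₀ = (κ₀ − κ∞ − θ)/2, Θ₁ = −(κ₀ − κ∞ + θ)/2, Θ∞ = −κ₀ − κ∞. -/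
open Complex

/-- the change of variables `y = f`, `z = (θ + κ₀ + κ∞)/2 − fg` maps
solutions of the Okamoto Hamiltonian system for P_V (with `η = −1`) to solutions of
the Jimbo–Miwa Hamiltonian system for P_V with parameters `Θ₀ = (κ₀ − κ∞ − θ)/2`,
`Θ₁ = −(κ₀ − κ∞ + θ)/2`, `Θ∞ = −κ₀ − κ∞`. -/
theorem okamoto_to_jimbo_miwa_PV
    (κ₀ κoo θ η κ : ℂ) (hη : η = -1) (hκ : κ = ((κ₀ + θ) ^ 2 - κoo ^ 2) / 4)
    (U : Set ℂ)
    (hUo : IsOpen U) (hUne : U.Nonempty) (hUc : IsPreconnected U)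
    (hU0 : ∀ t ∈ U, t ≠ 0)
    (f g : ℂ → ℂ)
    (hf0 : ∀ t ∈ U, f t ≠ 0)
    (hf : ∀ t ∈ U, HasDerivAt f
      ((1 / t) * ((f t - 1) ^ 2 * (2 * f t * g t - κ₀)
        - f t * (θ * (f t - 1) + t * η))) t)
    (hg : ∀ t ∈ U, HasDerivAt g
      (-(1 / t) * (g t * ((f t - 1) * (3 * f t * g t - g t - 2 * κ₀ - θ)
        - (θ * f t + t * η)) + κ)) t)
    (Θ₀ Θ₁ Θoo : ℂ)
    (hΘ₀ : Θ₀ = (κ₀ - κoo - θ) / 2)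
    (hΘ₁ : Θ₁ = -(κ₀ - κoo + θ) / 2)
    (hΘoo : Θoo = -κ₀ - κoo)
    (y z : ℂ → ℂ)
    (hy_def : ∀ t, y t = f t)
    (hz_def : ∀ t, z t = (θ + κ₀ + κoo) / 2 - f t * g t) :
    ∀ t ∈ U,
      HasDerivAt y
        (y t - (1 / (2 * t)) * ((y t - 1) * (Θ₀ * (y t - 3) - Θ₁ * (y t + 1)
          + (Θoo + 4 * z t) * (y t - 1)))) t ∧
      HasDerivAt z
        ((1 / (2 * t * y t)) * (z t * (Θ₀ * ((y t) ^ 2 - 3) - Θ₁ * ((y t) ^ 2 + 1)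
          + (Θoo + 2 * z t) * ((y t) ^ 2 - 1)) - Θ₀ * (Θ₀ + Θ₁ + Θoo))) t := by
  have hyf : y = f := funext hy_def
  have hzf : z = fun t => (θ + κ₀ + κoo) / 2 - f t * g t := funext hz_def
  intro t ht
  have ht0 := hU0 t ht
  have hft0 := hf0 t ht
  have hf' := hf t ht
  have hg' := hg t ht
  constructor
  · simp only [hy_def, hz_def]
    rw [hyf]
    convert hf' using 1
    subst hη hκ hΘ₀ hΘ₁ hΘoo
    field_simp
    ring
  · simp only [hy_def, hz_def]
    rw [hzf]
    beta_reduce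
    have hd : HasDerivAt (fun t => (θ + κ₀ + κoo) / 2 - f t * g t)
        (-((1 / t) * ((f t - 1) ^ 2 * (2 * f t * g t - κ₀)
        - f t * (θ * (f t - 1) + t * η)) * g t
        + f t * (-(1 / t) * (g t * ((f t - 1) * (3 * f t * g t - g t - 2 * κ₀ - θ)
        - (θ * f t + t * η)) + κ)))) t := (hf'.mul hg').const_sub _
    convert hd using 1
    subst hη hκ hΘ₀ hΘ₁ hΘoo
    field_simp
    ring
end
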